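/- arXiv:math/0101227 — 5 statements merged into one kernel-verified Lean document; each statement's English description precedes it below -/
import Mathlib

section
/- Let δ = sup_{x>0} (∫_0^x e^{-C(u)} du)·(∫_x^∞ e^{C(u)}/a(u) du) and assume 0 < δ < ∞. Then the Dirichlet principal eigenvalue λ₀ satisfies (4δ)^{-1} ≤ λ₀ ≤ δ^{-1}. -/
/-!
Write `φ x = ∫₀ˣ e^{-C}` and `ν x = ∫ₓ^∞ e^C / a`, so that `φ ν ≤ δ` on `(0, ∞)`.

Lower bound (a weighted Hardy inequality). For `f x = ∫₀ˣ g`, Cauchy–Schwarz with the weight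
`√φ` gives `f(x)² ≤ 2 √φ(x) ∫₀ˣ g² e^C √φ`, since `∫₀ˣ φ' / √φ = 2 √φ(x)`. After exchanging the
order of integration it remains to show `√φ(t) ∫ₜ^∞ √φ e^C / a ≤ 2δ`. Writing
`√φ(x) = √φ(t) + ∫ₜˣ φ' / (2√φ)` and exchanging once more, this splits into `φ(t) ν(t) ≤ δ` and
`√φ(t) ∫ₜ^∞ φ' ν / (2√φ) ≤ δ √φ(t) ∫ₜ^∞ φ' / (2 φ^{3/2}) ≤ δ`.
All of this takes place in lower Lebesgue integrals, where Tonelli needs no integrability.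

Upper bound. The test function `f = φ(min · x₀)` has energy `φ(x₀) / Z` and
`∫ f² dπ ≥ φ(x₀)² ν(x₀) / Z`, so `λ₀ ≤ 1 / (φ(x₀) ν(x₀))` for every `x₀ > 0`.
-/

open MeasureTheory Set Real Filter
open scoped ENNReal

theorem sq_lintegral_ofReal_abs_le {α : Type*} [MeasurableSpace α] {μ : Measure α}
    {u w : α → ℝ} (hu : AEMeasurable u μ) (hw : AEMeasurable w μ) (hw_pos : ∀ᵐ x ∂μ, 0 < w x) :
    (∫⁻ x, ENNReal.ofReal |u x| ∂μ) ^ 2 ≤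
      (∫⁻ x, ENNReal.ofReal (u x ^ 2 / w x) ∂μ) * ∫⁻ x, ENNReal.ofReal (w x) ∂μ := by
  set U : α → ℝ≥0∞ := fun x => ENNReal.ofReal √(u x ^ 2 / w x)
  set V : α → ℝ≥0∞ := fun x => ENNReal.ofReal √(w x)
  have hsq : ∀ y : ℝ, 0 ≤ y → ENNReal.ofReal √y ^ (2 : ℝ) = ENNReal.ofReal y := fun y hy => by
    rw [ENNReal.rpow_two, ← ENNReal.ofReal_pow (sqrt_nonneg y), sq_sqrt hy]
  have hUV : ∫⁻ x, ENNReal.ofReal |u x| ∂μ = ∫⁻ x, U x * V x ∂μ := by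
    refine lintegral_congr_ae (hw_pos.mono fun x hx => ?_)
    simp only [U, V]
    rw [← ENNReal.ofReal_mul (sqrt_nonneg _), ← sqrt_mul (by positivity),
      div_mul_cancel₀ _ hx.ne', sqrt_sq_eq_abs]
  have hU : ∫⁻ x, U x ^ (2 : ℝ) ∂μ = ∫⁻ x, ENNReal.ofReal (u x ^ 2 / w x) ∂μ :=
    lintegral_congr_ae (hw_pos.mono fun x hx => hsq _ (by positivity))
  have hV : ∫⁻ x, V x ^ (2 : ℝ) ∂μ = ∫⁻ x, ENNReal.ofReal (w x) ∂μ :=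
    lintegral_congr_ae (hw_pos.mono fun x hx => hsq _ hx.le)
  have holder := ENNReal.lintegral_mul_le_Lp_mul_Lq μ Real.HolderConjugate.two_two
    (by fun_prop : AEMeasurable (fun x => ENNReal.ofReal √(u x ^ 2 / w x)) μ)
    (by fun_prop : AEMeasurable (fun x => ENNReal.ofReal √(w x)) μ)
  calc (∫⁻ x, ENNReal.ofReal |u x| ∂μ) ^ 2
      ≤ ((∫⁻ x, U x ^ (2 : ℝ) ∂μ) ^ (1 / 2 : ℝ) * (∫⁻ x, V x ^ (2 : ℝ) ∂μ) ^ (1 / 2 : ℝ)) ^ 2 := by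
        rw [hUV]; exact pow_le_pow_left' holder 2
    _ = _ := by
        rw [hU, hV, mul_pow, ← ENNReal.rpow_natCast, ← ENNReal.rpow_natCast (_ ^ _),
          ← ENNReal.rpow_mul, ← ENNReal.rpow_mul]
        norm_num

theorem lintegral_Ioi_mul_lintegral_Ioc_swap {μ : Measure ℝ} [SFinite μ] (t : ℝ) {A B : ℝ → ℝ≥0∞}
    (hA : AEMeasurable A (μ.restrict (Ioi t))) (hB : AEMeasurable B (μ.restrict (Ioi t))) :
    ∫⁻ x in Ioi t, A x * ∫⁻ s in Ioc t x, B s ∂μ ∂μ =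
      ∫⁻ s in Ioi t, B s * ∫⁻ x in Ici s, A x ∂μ ∂μ := by
  set K : ℝ × ℝ → ℝ≥0∞ := {p | p.2 ≤ p.1}.indicator fun p => A p.1 * B p.2
  have hK : AEMeasurable K ((μ.restrict (Ioi t)).prod (μ.restrict (Ioi t))) :=
    (hA.comp_fst.mul hB.comp_snd).indicator (measurableSet_le measurable_snd measurable_fst)
  calc ∫⁻ x in Ioi t, A x * ∫⁻ s in Ioc t x, B s ∂μ ∂μ
      = ∫⁻ x in Ioi t, ∫⁻ s in Ioi t, K (x, s) ∂μ ∂μ := by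
        refine setLIntegral_congr_fun measurableSet_Ioi fun x _ => ?_
        have hKx : (fun s => K (x, s)) = (Iic x).indicator fun s => A x * B s := by
          ext s; simp [K, indicator]
        rw [hKx, lintegral_indicator measurableSet_Iic, Measure.restrict_restrict measurableSet_Iic,
          Iic_inter_Ioi, lintegral_const_mul'' _ (hB.mono_measure (Measure.restrict_mono
            Ioc_subset_Ioi_self le_rfl))]
    _ = ∫⁻ s in Ioi t, ∫⁻ x in Ioi t, K (x, s) ∂μ ∂μ := lintegral_lintegral_swap hK
    _ = _ := by
        refine setLIntegral_congr_fun measurableSet_Ioi fun s hs => ?_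
        have hKs : (fun x => K (x, s)) = (Ici s).indicator fun x => A x * B s := by
          ext x; simp [K, indicator]
        rw [hKs, lintegral_indicator measurableSet_Ici, Measure.restrict_restrict measurableSet_Ici,
          inter_eq_left.mpr (Ici_subset_Ioi.mpr hs), lintegral_mul_const'' _
            (hA.mono_measure (Measure.restrict_mono (Ici_subset_Ioi.mpr hs) le_rfl)), mul_comm]

theorem lintegral_Ioc_ofReal_deriv {G G' : ℝ → ℝ} {a b : ℝ} (hab : a ≤ b)
    (hcont : ContinuousOn G (Icc a b)) (hderiv : ∀ x ∈ Ioo a b, HasDerivAt G (G' x) x)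
    (hnonneg : ∀ x ∈ Ioo a b, 0 ≤ G' x) :
    ∫⁻ x in Ioc a b, ENNReal.ofReal (G' x) = ENNReal.ofReal (G b - G a) := by
  have hint := intervalIntegral.integrableOn_deriv_of_nonneg hcont hderiv hnonneg
  have hnonneg_ae : ∀ᵐ x ∂volume.restrict (Ioc a b), 0 ≤ G' x := by
    rw [← Measure.restrict_congr_set Ioo_ae_eq_Ioc]
    exact (ae_restrict_mem measurableSet_Ioo).mono hnonneg
  rw [← ofReal_integral_eq_lintegral_ofReal hint hnonneg_ae, ← intervalIntegral.integral_of_le hab,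
    intervalIntegral.integral_eq_sub_of_hasDerivAt_of_le hab hcont hderiv
      ((intervalIntegrable_iff_integrableOn_Ioc_of_le hab).mpr hint)]

theorem lintegral_Ioi_ofReal_deriv_le {G G' : ℝ → ℝ} {a M : ℝ}
    (hcont : ContinuousOn G (Ici a)) (hderiv : ∀ x ∈ Ioi a, HasDerivAt G (G' x) x)
    (hnonneg : ∀ x ∈ Ioi a, 0 ≤ G' x) (hM : ∀ x ∈ Ioi a, G x ≤ M) :
    ∫⁻ x in Ioi a, ENNReal.ofReal (G' x) ≤ ENNReal.ofReal (M - G a) := by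
  have hunion : ⋃ n : ℕ, Ioc a (a + n + 1) = Ioi a :=
    iUnion_Ioc_eq_Ioi_self_iff.mpr fun x _ => ⟨⌈x - a⌉₊, by linarith [Nat.le_ceil (x - a)]⟩
  have hmono : Monotone fun n : ℕ => Ioc a (a + n + 1) := fun m n hmn =>
    Ioc_subset_Ioc_right (by gcongr)
  rw [← hunion, setLIntegral_iUnion_of_directed _ hmono.directed_le]
  refine iSup_le fun n => ?_
  have hb : a < a + n + 1 := by linarith [n.cast_nonneg (α := ℝ)]
  rw [lintegral_Ioc_ofReal_deriv hb.le (hcont.mono Icc_subset_Ici_self)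
    (fun x hx => hderiv x hx.1) fun x hx => hnonneg x hx.1]
  exact ENNReal.ofReal_le_ofReal (by linarith [hM _ hb])

theorem continuous_of_hasDerivAt {φ v : ℝ → ℝ} (hφ : ∀ x, HasDerivAt φ (v x) x) : Continuous φ :=
  continuous_iff_continuousAt.mpr fun x => (hφ x).continuousAt

theorem measurable_of_hasDerivAt {φ v : ℝ → ℝ} (hφ : ∀ x, HasDerivAt φ (v x) x) : Measurable v := by
  have hv : v = deriv φ := funext fun x => (hφ x).deriv.symm
  exact hv ▸ measurable_deriv φ

section WeightedHardy

variable {φ v : ℝ → ℝ} (hφ : ∀ x, HasDerivAt φ (v x) x) (hv : ∀ x, 0 < v x) (hφ0 : φ 0 = 0)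
include hφ hv hφ0

theorem pos_of_hasDerivAt_pos {x : ℝ} (hx : 0 < x) : 0 < φ x :=
  hφ0 ▸ strictMono_of_hasDerivAt_pos hφ hv hx

theorem lintegral_Ioc_div_two_sqrt {t x : ℝ} (ht : 0 ≤ t) (htx : t ≤ x) :
    ∫⁻ s in Ioc t x, ENNReal.ofReal (v s / (2 * √(φ s))) = ENNReal.ofReal (√(φ x) - √(φ t)) := by
  refine lintegral_Ioc_ofReal_deriv (G := fun y => √(φ y)) htx ?_ (fun s hs => ?_) fun s _ => ?_
  · exact (continuous_of_hasDerivAt hφ).sqrt.continuousOn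
  · exact (hφ s).sqrt (pos_of_hasDerivAt_pos hφ hv hφ0 (ht.trans_lt hs.1)).ne'
  · have := hv s
    positivity

theorem ofReal_sq_intervalIntegral_le {g : ℝ → ℝ} {x : ℝ} (hx : 0 < x)
    (hg : IntervalIntegrable g volume 0 x) :
    ENNReal.ofReal ((∫ s in (0 : ℝ)..x, g s) ^ 2) ≤ ENNReal.ofReal √(φ x) *
      ∫⁻ s in Ioc 0 x, ENNReal.ofReal (g s ^ 2 / v s) * (2 * ENNReal.ofReal √(φ s)) := by
  have hgI : IntegrableOn g (Ioc 0 x) := (intervalIntegrable_iff_integrableOn_Ioc_of_le hx.le).mp hg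
  have hw_pos : ∀ᵐ s ∂volume.restrict (Ioc 0 x), 0 < v s / (2 * √(φ s)) := by
    refine (ae_restrict_mem measurableSet_Ioc).mono fun s hs => ?_
    have := hv s
    have := pos_of_hasDerivAt_pos hφ hv hφ0 hs.1
    positivity
  have hφc := continuous_of_hasDerivAt hφ
  have hw_meas : AEMeasurable (fun s => v s / (2 * √(φ s))) (volume.restrict (Ioc 0 x)) :=
    ((measurable_of_hasDerivAt hφ).div (hφc.sqrt.measurable.const_mul 2)).aemeasurable
  have hweight : ∀ s, ENNReal.ofReal (g s ^ 2 / (v s / (2 * √(φ s)))) =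
      ENNReal.ofReal (g s ^ 2 / v s) * (2 * ENNReal.ofReal √(φ s)) := fun s => by
    have := hv s
    rw [div_div_eq_mul_div, mul_div_right_comm, ENNReal.ofReal_mul (by positivity),
      ENNReal.ofReal_mul zero_le_two, ENNReal.ofReal_ofNat]
  calc ENNReal.ofReal ((∫ s in (0 : ℝ)..x, g s) ^ 2)
      = ENNReal.ofReal |∫ s in Ioc 0 x, g s| ^ 2 := by
        rw [intervalIntegral.integral_of_le hx.le, ← ENNReal.ofReal_pow (abs_nonneg _), sq_abs]
    _ ≤ (∫⁻ s in Ioc 0 x, ENNReal.ofReal |g s|) ^ 2 := by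
        gcongr
        simpa only [enorm_eq_ofReal_abs] using enorm_integral_le_lintegral_enorm g
    _ ≤ (∫⁻ s in Ioc 0 x, ENNReal.ofReal (g s ^ 2 / (v s / (2 * √(φ s))))) *
          ∫⁻ s in Ioc 0 x, ENNReal.ofReal (v s / (2 * √(φ s))) :=
        sq_lintegral_ofReal_abs_le hgI.aemeasurable hw_meas hw_pos
    _ = _ := by
        rw [lintegral_Ioc_div_two_sqrt hφ hv hφ0 le_rfl hx.le, hφ0, sqrt_zero, sub_zero, mul_comm]
        simp only [hweight]

theorem lintegral_Ioi_div_two_sqrt_div_le {t : ℝ} (ht : 0 < t) :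
    ∫⁻ s in Ioi t, ENNReal.ofReal (v s / (2 * √(φ s)) / φ s) ≤ ENNReal.ofReal (√(φ t))⁻¹ := by
  have hφ_pos : ∀ x ≥ t, 0 < φ x := fun x hx => pos_of_hasDerivAt_pos hφ hv hφ0 (ht.trans_le hx)
  have hψ_ne : ∀ x ≥ t, √(φ x) ≠ 0 := fun x hx => (sqrt_pos.mpr (hφ_pos x hx)).ne'
  have := lintegral_Ioi_ofReal_deriv_le (G := fun y => -(√(φ y))⁻¹)
    (G' := fun s => v s / (2 * √(φ s)) / φ s) (M := 0)
    (fun x hx => ((continuous_of_hasDerivAt hφ).sqrt.continuousAt.inv₀ (hψ_ne x hx)).neg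
      |>.continuousWithinAt)
    (fun x hx => ?_) (fun x hx => ?_) fun x _ => neg_nonpos.mpr (inv_nonneg.mpr (sqrt_nonneg _))
  · simpa using this
  · have hφx := hφ_pos x (le_of_lt hx)
    refine (((hφ x).sqrt hφx.ne').inv (hψ_ne x (le_of_lt hx))).neg.congr_deriv ?_
    rw [sq_sqrt hφx.le, neg_div, neg_neg]
  · have := hv x
    have := hφ_pos x (le_of_lt hx)
    positivity

theorem lintegral_Ici_mul_sqrt_eq {h : ℝ → ℝ≥0∞} {t : ℝ} (ht : 0 ≤ t)
    (hh : AEMeasurable h (volume.restrict (Ioi t))) :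
    ∫⁻ x in Ici t, h x * ENNReal.ofReal √(φ x) =
      ENNReal.ofReal √(φ t) * (∫⁻ x in Ioi t, h x) +
        ∫⁻ s in Ioi t, ENNReal.ofReal (v s / (2 * √(φ s))) * ∫⁻ x in Ici s, h x := by
  have hk : Measurable fun s => ENNReal.ofReal (v s / (2 * √(φ s))) :=
    ((measurable_of_hasDerivAt hφ).div
      ((continuous_of_hasDerivAt hφ).sqrt.measurable.const_mul 2)).ennreal_ofReal
  rw [← lintegral_Ioi_mul_lintegral_Ioc_swap t hh hk.aemeasurable,
    ← lintegral_const_mul'' _ hh, ← lintegral_add_left' (hh.const_mul _),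
    setLIntegral_congr Ioi_ae_eq_Ici.symm]
  refine setLIntegral_congr_fun measurableSet_Ioi fun x hx => ?_
  have hmono := (strictMono_of_hasDerivAt_pos hφ hv).monotone (le_of_lt hx)
  rw [lintegral_Ioc_div_two_sqrt hφ hv hφ0 ht (le_of_lt hx), mul_comm (ENNReal.ofReal _),
    ← mul_add, ← ENNReal.ofReal_add (sqrt_nonneg _) (sub_nonneg.mpr (sqrt_le_sqrt hmono)),
    add_sub_cancel]

theorem ofReal_sqrt_mul_lintegral_Ici_le {h : ℝ → ℝ≥0∞} {δ : ℝ≥0∞} {t : ℝ} (ht : 0 < t)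
    (hh : AEMeasurable h (volume.restrict (Ioi t)))
    (hδ : ∀ x ≥ t, ENNReal.ofReal (φ x) * ∫⁻ s in Ioi x, h s ≤ δ) :
    ENNReal.ofReal √(φ t) * ∫⁻ x in Ici t, h x * ENNReal.ofReal √(φ x) ≤ 2 * δ := by
  have hφ_pos : ∀ x ≥ t, 0 < φ x := fun x hx => pos_of_hasDerivAt_pos hφ hv hφ0 (ht.trans_le hx)
  have hφc := continuous_of_hasDerivAt hφ
  set G' : ℝ → ℝ := fun s => v s / (2 * √(φ s)) / φ s
  have hG'_meas : Measurable fun s => ENNReal.ofReal (G' s) :=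
    ((measurable_of_hasDerivAt hφ).div (hφc.sqrt.measurable.const_mul 2)).div
      hφc.measurable |>.ennreal_ofReal
  have hk : ∀ s ∈ Ioi t, ENNReal.ofReal (v s / (2 * √(φ s))) * ∫⁻ x in Ici s, h x ≤
      δ * ENNReal.ofReal (G' s) := fun s hs => by
    have hφs := hφ_pos s (le_of_lt hs)
    have := hv s
    rw [setLIntegral_congr Ioi_ae_eq_Ici.symm, ← div_mul_cancel₀ (v s / (2 * √(φ s))) hφs.ne',
      ENNReal.ofReal_mul (by positivity), mul_assoc, mul_comm δ]
    gcongr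
    exact hδ s (le_of_lt hs)
  set p := ENNReal.ofReal √(φ t)
  have hpp : p * p = ENNReal.ofReal (φ t) := by
    rw [← ENNReal.ofReal_mul (sqrt_nonneg _), mul_self_sqrt (hφ_pos t le_rfl).le]
  calc p * ∫⁻ x in Ici t, h x * ENNReal.ofReal √(φ x)
      ≤ p * (p * (∫⁻ x in Ioi t, h x) + ∫⁻ s in Ioi t, δ * ENNReal.ofReal (G' s)) := by
        rw [lintegral_Ici_mul_sqrt_eq hφ hv hφ0 ht.le hh]
        gcongr p * (_ + ?_)
        exact setLIntegral_mono' measurableSet_Ioi hk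
    _ = ENNReal.ofReal (φ t) * (∫⁻ x in Ioi t, h x) +
          δ * (p * ∫⁻ s in Ioi t, ENNReal.ofReal (G' s)) := by
        rw [lintegral_const_mul _ hG'_meas, ← hpp]
        ring
    _ ≤ δ + δ * (p * ENNReal.ofReal (√(φ t))⁻¹) := by
        gcongr
        · exact hδ t le_rfl
        · exact lintegral_Ioi_div_two_sqrt_div_le hφ hv hφ0 ht
    _ = 2 * δ := by
        rw [← ENNReal.ofReal_mul (sqrt_nonneg _),
          mul_inv_cancel₀ (sqrt_pos.mpr (hφ_pos t le_rfl)).ne', ENNReal.ofReal_one, mul_one,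
          two_mul]

theorem weighted_hardy_inequality {g : ℝ → ℝ} {h : ℝ → ℝ≥0∞} {δ : ℝ≥0∞}
    (hg : ∀ x > 0, IntervalIntegrable g volume 0 x) (hh : AEMeasurable h (volume.restrict (Ioi 0)))
    (hδ : ∀ x > 0, ENNReal.ofReal (φ x) * ∫⁻ s in Ioi x, h s ≤ δ) :
    ∫⁻ x in Ioi 0, ENNReal.ofReal ((∫ s in (0 : ℝ)..x, g s) ^ 2) * h x ≤
      4 * δ * ∫⁻ x in Ioi 0, ENNReal.ofReal (g x ^ 2 / v x) := by
  have hφc := continuous_of_hasDerivAt hφ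
  have hψ : Measurable fun x => ENNReal.ofReal √(φ x) := hφc.sqrt.measurable.ennreal_ofReal
  have hg_meas : AEMeasurable g (volume.restrict (Ioi 0)) := aemeasurable_Ioi_of_forall_Ioc
    fun x hx => ((intervalIntegrable_iff_integrableOn_Ioc_of_le hx.le).mp (hg x hx)).aemeasurable
  have hq : AEMeasurable (fun x => ENNReal.ofReal (g x ^ 2 / v x)) (volume.restrict (Ioi 0)) :=
    ((hg_meas.pow_const 2).div (measurable_of_hasDerivAt hφ).aemeasurable).ennreal_ofReal
  set B : ℝ → ℝ≥0∞ := fun s => ENNReal.ofReal (g s ^ 2 / v s) * (2 * ENNReal.ofReal √(φ s))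
  calc ∫⁻ x in Ioi 0, ENNReal.ofReal ((∫ s in (0 : ℝ)..x, g s) ^ 2) * h x
      ≤ ∫⁻ x in Ioi 0, h x * ENNReal.ofReal √(φ x) * ∫⁻ s in Ioc 0 x, B s :=
        setLIntegral_mono' measurableSet_Ioi fun x hx => by
          rw [mul_comm _ (h x), mul_assoc]
          gcongr
          exact ofReal_sq_intervalIntegral_le hφ hv hφ0 hx (hg x hx)
    _ = ∫⁻ s in Ioi 0, B s * ∫⁻ x in Ici s, h x * ENNReal.ofReal √(φ x) :=
        lintegral_Ioi_mul_lintegral_Ioc_swap 0 (hh.mul hψ.aemeasurable)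
          (hq.mul (hψ.const_mul 2).aemeasurable)
    _ ≤ ∫⁻ s in Ioi 0, 4 * δ * ENNReal.ofReal (g s ^ 2 / v s) :=
        setLIntegral_mono' measurableSet_Ioi fun s hs => by
          have hIci := ofReal_sqrt_mul_lintegral_Ici_le hφ hv hφ0 hs
            (hh.mono_measure (Measure.restrict_mono (Ioi_subset_Ioi (le_of_lt hs)) le_rfl))
            fun x hx => hδ x (hs.trans_le hx)
          calc B s * ∫⁻ x in Ici s, h x * ENNReal.ofReal √(φ x)
              = ENNReal.ofReal (g s ^ 2 / v s) * 2 *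
                  (ENNReal.ofReal √(φ s) * ∫⁻ x in Ici s, h x * ENNReal.ofReal √(φ x)) := by
                ring
            _ ≤ ENNReal.ofReal (g s ^ 2 / v s) * 2 * (2 * δ) := by gcongr
            _ = 4 * δ * ENNReal.ofReal (g s ^ 2 / v s) := by ring
    _ = 4 * δ * ∫⁻ x in Ioi 0, ENNReal.ofReal (g x ^ 2 / v x) := lintegral_const_mul'' _ hq

end WeightedHardy

theorem setIntegral_Ioi_pos {f : ℝ → ℝ} {x : ℝ} (hf : IntegrableOn f (Ioi x))
    (hpos : ∀ y, 0 < f y) : 0 < ∫ y in Ioi x, f y := by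
  rw [setIntegral_pos_iff_support_of_nonneg_ae (ae_of_all _ fun y => (hpos y).le) hf,
    eq_univ_of_forall fun y => Function.mem_support.mpr (hpos y).ne', univ_inter, Real.volume_Ioi]
  exact ENNReal.zero_lt_top

theorem intervalIntegral_indicator_Iic {e : ℝ → ℝ} {x x₀ : ℝ} (hx : 0 ≤ x) (hx₀ : 0 ≤ x₀) :
    ∫ u in (0 : ℝ)..x, (Iic x₀).indicator e u = ∫ u in (0 : ℝ)..min x x₀, e u := by
  rcases le_total x x₀ with hxx₀ | hx₀x
  · rw [min_eq_left hxx₀]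
    refine intervalIntegral.integral_congr fun u hu => indicator_of_mem ?_ e
    rw [uIcc_of_le hx] at hu
    exact hu.2.trans hxx₀
  · rw [min_eq_right hx₀x]
    exact intervalIntegral.integral_indicator ⟨hx₀, hx₀x⟩

theorem integrableOn_div_mul_const {f a : ℝ → ℝ} {s : Set ℝ}
    (hf : IntegrableOn (fun x => f x / a x) s) (c : ℝ) :
    IntegrableOn (fun x => f x / (a x * c)) s := by
  have := hf.div_const c
  simp only [div_div] at this
  exact this

theorem integral_sq_indicator_Iic_mul_exp {C : ℝ → ℝ} (hC : Continuous C) {x₀ : ℝ} (hx₀ : 0 ≤ x₀)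
    (Z : ℝ) :
    IntegrableOn (fun u => (Iic x₀).indicator (fun u => exp (-C u)) u ^ 2 * exp (C u) / Z)
        (Ioi 0) ∧
      ∫ u in Ioi 0, (Iic x₀).indicator (fun u => exp (-C u)) u ^ 2 * exp (C u) / Z =
        (∫ u in (0 : ℝ)..x₀, exp (-C u)) / Z := by
  have hN : ∀ u, (Iic x₀).indicator (fun u => exp (-C u)) u ^ 2 * exp (C u) / Z =
      (Iic x₀).indicator (fun u => exp (-C u) / Z) u := by
    intro u
    by_cases hu : u ∈ Iic x₀
    · simp only [indicator_of_mem hu, sq, ← exp_add]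
      ring_nf
    · simp [indicator_of_notMem hu]
  simp only [hN]
  constructor
  · refine (integrable_indicator_iff measurableSet_Iic).mpr ?_
    rw [IntegrableOn, Measure.restrict_restrict measurableSet_Iic, Iic_inter_Ioi]
    exact (by fun_prop : Continuous fun u => exp (-C u) / Z).integrableOn_Ioc
  · rw [setIntegral_indicator measurableSet_Iic, Ioi_inter_Iic, integral_div,
      ← intervalIntegral.integral_of_le hx₀]

theorem integrableOn_sq_mul_and_le_integral {F w : ℝ → ℝ} {M x₀ : ℝ} (hx₀ : 0 ≤ x₀)
    (hF : Continuous F) (hw : IntegrableOn w (Ioi 0)) (hw_nonneg : ∀ x, 0 ≤ w x)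
    (hF_bound : ∀ x > 0, |F x| ≤ M) (hF_eq : ∀ x > x₀, F x = M) :
    IntegrableOn (fun x => F x ^ 2 * w x) (Ioi 0) ∧
      M ^ 2 * ∫ x in Ioi x₀, w x ≤ ∫ x in Ioi 0, F x ^ 2 * w x := by
  have hint : IntegrableOn (fun x => F x ^ 2 * w x) (Ioi 0) := by
    refine hw.bdd_mul (c := M ^ 2) (hF.pow 2).aestronglyMeasurable ?_
    filter_upwards [ae_restrict_mem measurableSet_Ioi] with x hx
    rw [Real.norm_eq_abs, abs_pow]
    exact pow_le_pow_left₀ (abs_nonneg _) (hF_bound x hx) 2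
  refine ⟨hint, ?_⟩
  calc M ^ 2 * ∫ x in Ioi x₀, w x = ∫ x in Ioi x₀, F x ^ 2 * w x := by
        rw [← integral_const_mul]
        exact setIntegral_congr_fun measurableSet_Ioi fun x hx => by rw [hF_eq x hx]
    _ ≤ ∫ x in Ioi 0, F x ^ 2 * w x :=
        setIntegral_mono_set hint (ae_of_all _ fun x => mul_nonneg (sq_nonneg _) (hw_nonneg x))
          (Ioi_subset_Ioi hx₀).eventuallyLE

def dirichletRayleighQuotients (C a : ℝ → ℝ) (Z : ℝ) : Set ℝ :=
  { r : ℝ | ∃ f g : ℝ → ℝ,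
      (∀ x : ℝ, IntervalIntegrable g volume 0 x) ∧
      (∀ x ≥ (0:ℝ), f x = ∫ t in (0:ℝ)..x, g t) ∧
      IntegrableOn (fun x => f x ^ 2 * (Real.exp (C x) / (a x * Z))) (Ioi 0) ∧
      (0 < ∫ x in Ioi (0:ℝ), f x ^ 2 * (Real.exp (C x) / (a x * Z))) ∧
      IntegrableOn (fun x => g x ^ 2 * Real.exp (C x) / Z) (Ioi 0) ∧
      r = (∫ x in Ioi (0:ℝ), g x ^ 2 * Real.exp (C x) / Z) /
          (∫ x in Ioi (0:ℝ), f x ^ 2 * (Real.exp (C x) / (a x * Z))) }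

section Dirichlet

variable {C a : ℝ → ℝ} {Z : ℝ} (hC : Continuous C) (ha : ∀ x, 0 < a x) (hZ : 0 < Z)
  (hint : IntegrableOn (fun u => exp (C u) / a u) (Ioi 0))
include hC ha hZ hint

omit hC in
theorem ofReal_mul_lintegral_Ioi_density_le {δ x : ℝ} (hx : 0 < x)
    (hδx : (∫ u in (0 : ℝ)..x, exp (-C u)) * (∫ u in Ioi x, exp (C u) / a u) ≤ δ) :
    ENNReal.ofReal (Z * ∫ u in (0 : ℝ)..x, exp (-C u)) *
      ∫⁻ s in Ioi x, ENNReal.ofReal (exp (C s) / (a s * Z)) ≤ ENNReal.ofReal δ := by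
  have hΦ : 0 ≤ ∫ u in (0 : ℝ)..x, exp (-C u) :=
    intervalIntegral.integral_nonneg hx.le fun u _ => (exp_pos _).le
  rw [← ofReal_integral_eq_lintegral_ofReal
    ((integrableOn_div_mul_const hint Z).mono_set (Ioi_subset_Ioi hx.le))
    (ae_of_all _ fun s => (div_pos (exp_pos _) (mul_pos (ha s) hZ)).le),
    ← ENNReal.ofReal_mul (by positivity)]
  refine ENNReal.ofReal_le_ofReal (le_of_eq_of_le ?_ hδx)
  simp only [← div_div, integral_div]
  field_simp

theorem exists_mem_dirichletRayleighQuotients_le {x₀ : ℝ} (hx₀ : 0 < x₀) :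
    ∃ r ∈ dirichletRayleighQuotients C a Z,
      r ≤ ((∫ u in (0 : ℝ)..x₀, exp (-C u)) * ∫ u in Ioi x₀, exp (C u) / a u)⁻¹ := by
  set Φ : ℝ → ℝ := fun x => ∫ u in (0 : ℝ)..x, exp (-C u)
  set ν : ℝ := ∫ u in Ioi x₀, exp (C u) / a u
  set w : ℝ → ℝ := fun x => exp (C x) / (a x * Z)
  set g₀ : ℝ → ℝ := (Iic x₀).indicator fun u => exp (-C u)
  set f₀ : ℝ → ℝ := fun x => ∫ u in (0 : ℝ)..x, g₀ u
  have he : Continuous fun u => exp (-C u) := by fun_prop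
  have hΦ_mono : StrictMono Φ := strictMono_of_hasDerivAt_pos
    (fun x => (he.integral_hasStrictDerivAt 0 x).hasDerivAt) fun x => exp_pos _
  have hΦ0 : Φ 0 = 0 := intervalIntegral.integral_same
  have hg₀ : ∀ x y, IntervalIntegrable g₀ volume x y := fun x y =>
    intervalIntegrable_iff.mpr ((he.intervalIntegrable x y).def'.indicator measurableSet_Iic)
  have hf₀ : ∀ x ≥ 0, f₀ x = Φ (min x x₀) := fun x hx => intervalIntegral_indicator_Iic hx hx₀.le
  have hw : IntegrableOn w (Ioi 0) := integrableOn_div_mul_const hint Z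
  have hν : 0 < ν := setIntegral_Ioi_pos (hint.mono_set (Ioi_subset_Ioi hx₀.le))
    fun u => div_pos (exp_pos _) (ha u)
  have hΦ_pos : 0 < Φ x₀ := hΦ0 ▸ hΦ_mono hx₀
  have hf₀_bound : ∀ x > 0, |f₀ x| ≤ Φ x₀ := fun x hx => by
    rw [hf₀ x (le_of_lt hx), abs_of_nonneg (hΦ0 ▸ hΦ_mono.monotone (le_min (le_of_lt hx) hx₀.le))]
    exact hΦ_mono.monotone (min_le_right _ _)
  obtain ⟨hD_int, hD_ge⟩ := integrableOn_sq_mul_and_le_integral (F := f₀) hx₀.le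
    (intervalIntegral.continuous_primitive hg₀ 0) hw
    (fun x => (div_pos (exp_pos _) (mul_pos (ha x) hZ)).le) hf₀_bound fun x hx => by
      rw [hf₀ x (hx₀.le.trans (le_of_lt hx)), min_eq_right (le_of_lt hx)]
  have hν_w : ∫ x in Ioi x₀, w x = ν / Z := by
    simp only [w, ← div_div, integral_div]
    rfl
  rw [hν_w] at hD_ge
  obtain ⟨hN_int, hN_val⟩ := integral_sq_indicator_Iic_mul_exp hC hx₀.le Z
  refine ⟨_, ⟨f₀, g₀, hg₀ 0, fun x _ => rfl, hD_int, (by positivity : (0 : ℝ) < _).trans_le hD_ge,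
    hN_int, rfl⟩, ?_⟩
  rw [hN_val]
  calc Φ x₀ / Z / ∫ x in Ioi 0, f₀ x ^ 2 * w x ≤ Φ x₀ / Z / (Φ x₀ ^ 2 * (ν / Z)) :=
        div_le_div_of_nonneg_left (by positivity) (by positivity) hD_ge
    _ = (Φ x₀ * ν)⁻¹ := by field_simp

theorem inv_four_mul_le_of_mem_dirichletRayleighQuotients {δ r : ℝ} (hδ : 0 < δ)
    (hδx : ∀ x > 0, (∫ u in (0 : ℝ)..x, exp (-C u)) * (∫ u in Ioi x, exp (C u) / a u) ≤ δ)
    (hr : r ∈ dirichletRayleighQuotients C a Z) : (4 * δ)⁻¹ ≤ r := by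
  obtain ⟨f, g, hg, hfg, hD_int, hD_pos, hN_int, rfl⟩ := hr
  set w : ℝ → ℝ := fun x => exp (C x) / (a x * Z)
  have hw_pos : ∀ x, 0 < w x := fun x => div_pos (exp_pos _) (mul_pos (ha x) hZ)
  have hw_int : IntegrableOn w (Ioi 0) := integrableOn_div_mul_const hint Z
  have he : Continuous fun u => exp (-C u) := by fun_prop
  have hφ : ∀ x, HasDerivAt (fun x => Z * ∫ u in (0 : ℝ)..x, exp (-C u)) (Z * exp (-C x)) x :=
    fun x => (he.integral_hasStrictDerivAt 0 x).hasDerivAt.const_mul Z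
  have hardy := weighted_hardy_inequality hφ (fun x => mul_pos hZ (exp_pos _)) (by simp)
    (fun x _ => hg x) hw_int.aemeasurable.ennreal_ofReal
    fun x hx => ofReal_mul_lintegral_Ioi_density_le ha hZ hint hx (hδx x hx)
  have hD : ∫⁻ x in Ioi 0, ENNReal.ofReal ((∫ s in (0 : ℝ)..x, g s) ^ 2) * ENNReal.ofReal (w x) =
      ENNReal.ofReal (∫ x in Ioi 0, f x ^ 2 * w x) := by
    rw [ofReal_integral_eq_lintegral_ofReal hD_int
      (ae_of_all _ fun x => mul_nonneg (sq_nonneg _) (hw_pos x).le)]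
    refine setLIntegral_congr_fun measurableSet_Ioi fun x hx => ?_
    rw [hfg x (le_of_lt hx), ENNReal.ofReal_mul (sq_nonneg _)]
  have hN : ∫⁻ x in Ioi 0, ENNReal.ofReal (g x ^ 2 / (Z * exp (-C x))) =
      ENNReal.ofReal (∫ x in Ioi 0, g x ^ 2 * exp (C x) / Z) := by
    rw [ofReal_integral_eq_lintegral_ofReal hN_int (ae_of_all _ fun x => by positivity)]
    refine setLIntegral_congr_fun measurableSet_Ioi fun x _ => ?_
    rw [exp_neg]
    field_simp
  have hN_nonneg : 0 ≤ ∫ x in Ioi 0, g x ^ 2 * exp (C x) / Z :=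
    setIntegral_nonneg measurableSet_Ioi fun x _ => by positivity
  rw [hD, hN, ← ENNReal.ofReal_ofNat 4, ← ENNReal.ofReal_mul zero_le_four,
    ← ENNReal.ofReal_mul (by positivity), ENNReal.ofReal_le_ofReal_iff (by positivity)] at hardy
  rw [le_div_iff₀ hD_pos, inv_mul_le_iff₀ (by positivity)]
  exact hardy

end Dirichlet

theorem dirichlet_eigenvalue_bounds_general
    (a b : ℝ → ℝ) (ha : ∀ x, 0 < a x)
    (hloc : ∀ x : ℝ, IntervalIntegrable (fun u => b u / a u) volume 0 x)
    (C : ℝ → ℝ) (hC : ∀ x, C x = ∫ u in (0:ℝ)..x, b u / a u)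
    (hZint : IntegrableOn (fun u => Real.exp (C u) / a u) (Ioi 0))
    (Z : ℝ) (hZ : Z = ∫ u in Ioi (0:ℝ), Real.exp (C u) / a u)
    (δ : ℝ)
    (hδ : δ = ⨆ x : {x : ℝ // 0 < x},
      (∫ u in (0:ℝ)..(x:ℝ), Real.exp (-C u)) *
        ∫ u in Ioi (x:ℝ), Real.exp (C u) / a u)
    (hδbdd : BddAbove (Set.range fun x : {x : ℝ // 0 < x} =>
      (∫ u in (0:ℝ)..(x:ℝ), Real.exp (-C u)) *
        ∫ u in Ioi (x:ℝ), Real.exp (C u) / a u))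
    (hδpos : 0 < δ)
    (lam0 : ℝ)
    (hlam0 : lam0 = sInf { r : ℝ | ∃ f g : ℝ → ℝ,
      (∀ x : ℝ, IntervalIntegrable g volume 0 x) ∧
      (∀ x ≥ (0:ℝ), f x = ∫ t in (0:ℝ)..x, g t) ∧
      IntegrableOn (fun x => f x ^ 2 * (Real.exp (C x) / (a x * Z))) (Ioi 0) ∧
      (0 < ∫ x in Ioi (0:ℝ), f x ^ 2 * (Real.exp (C x) / (a x * Z))) ∧
      IntegrableOn (fun x => g x ^ 2 * Real.exp (C x) / Z) (Ioi 0) ∧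
      r = (∫ x in Ioi (0:ℝ), g x ^ 2 * Real.exp (C x) / Z) /
          (∫ x in Ioi (0:ℝ), f x ^ 2 * (Real.exp (C x) / (a x * Z))) }) :
    (4 * δ)⁻¹ ≤ lam0 ∧ lam0 ≤ δ⁻¹ := by
  have hCc : Continuous C := by
    rw [funext hC]
    exact intervalIntegral.continuous_primitive (fun u v => (hloc u).symm.trans (hloc v)) 0
  have hZpos : 0 < Z := hZ ▸ setIntegral_Ioi_pos hZint fun u => div_pos (exp_pos _) (ha u)
  have hδx : ∀ x > 0, (∫ u in (0 : ℝ)..x, exp (-C u)) * (∫ u in Ioi x, exp (C u) / a u) ≤ δ :=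
    fun x hx => hδ ▸ le_ciSup hδbdd ⟨x, hx⟩
  change lam0 = sInf (dirichletRayleighQuotients C a Z) at hlam0
  have hlower : ∀ r ∈ dirichletRayleighQuotients C a Z, (4 * δ)⁻¹ ≤ r := fun r =>
    inv_four_mul_le_of_mem_dirichletRayleighQuotients hCc ha hZpos hZint hδpos hδx
  obtain ⟨r₁, hr₁, -⟩ := exists_mem_dirichletRayleighQuotients_le hCc ha hZpos hZint one_pos
  have hlam_ge : (4 * δ)⁻¹ ≤ lam0 := hlam0 ▸ le_csInf ⟨r₁, hr₁⟩ hlower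
  refine ⟨hlam_ge, ?_⟩
  have hlam_pos : 0 < lam0 := (by positivity : (0 : ℝ) < (4 * δ)⁻¹).trans_le hlam_ge
  rw [← inv_inv lam0]
  refine inv_anti₀ hδpos (hδ ▸ ciSup_le fun x => ?_)
  obtain ⟨r, hr, hr_le⟩ := exists_mem_dirichletRayleighQuotients_le hCc ha hZpos hZint x.2
  have hlam_le : lam0 ≤ _ := (hlam0 ▸ csInf_le ⟨_, hlower⟩ hr).trans hr_le
  exact (le_inv_comm₀ hlam_pos (inv_pos.mp (hlam_pos.trans_le hlam_le))).mp hlam_le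

/-- Chen (2000b, 2001a), part (1) for the Dirichlet eigenvalue: if
`δ = sup_{x>0} (∫_0^x e^{-C})·(∫_x^∞ e^C/a)` satisfies `0 < δ < ∞`, then
`(4δ)⁻¹ ≤ λ₀ ≤ δ⁻¹`. -/
theorem dirichlet_eigenvalue_bounds
    (a b : ℝ → ℝ) (ha : ∀ x, 0 < a x) (hma : Measurable a) (hmb : Measurable b)
    (hloc : ∀ x : ℝ, IntervalIntegrable (fun u => b u / a u) volume 0 x)
    (C : ℝ → ℝ) (hC : ∀ x, C x = ∫ u in (0:ℝ)..x, b u / a u)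
    (hZint : IntegrableOn (fun u => Real.exp (C u) / a u) (Ioi 0))
    (Z : ℝ) (hZ : Z = ∫ u in Ioi (0:ℝ), Real.exp (C u) / a u)
    (δ : ℝ)
    (hδ : δ = ⨆ x : {x : ℝ // 0 < x},
      (∫ u in (0:ℝ)..(x:ℝ), Real.exp (-C u)) *
        ∫ u in Ioi (x:ℝ), Real.exp (C u) / a u)
    (hδbdd : BddAbove (Set.range fun x : {x : ℝ // 0 < x} =>
      (∫ u in (0:ℝ)..(x:ℝ), Real.exp (-C u)) *
        ∫ u in Ioi (x:ℝ), Real.exp (C u) / a u))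
    (hδpos : 0 < δ)
    (lam0 : ℝ)
    (hlam0 : lam0 = sInf { r : ℝ | ∃ f g : ℝ → ℝ,
      (∀ x : ℝ, IntervalIntegrable g volume 0 x) ∧
      (∀ x ≥ (0:ℝ), f x = ∫ t in (0:ℝ)..x, g t) ∧
      IntegrableOn (fun x => f x ^ 2 * (Real.exp (C x) / (a x * Z))) (Ioi 0) ∧
      (0 < ∫ x in Ioi (0:ℝ), f x ^ 2 * (Real.exp (C x) / (a x * Z))) ∧
      IntegrableOn (fun x => g x ^ 2 * Real.exp (C x) / Z) (Ioi 0) ∧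
      r = (∫ x in Ioi (0:ℝ), g x ^ 2 * Real.exp (C x) / Z) /
          (∫ x in Ioi (0:ℝ), f x ^ 2 * (Real.exp (C x) / (a x * Z))) }) :
    (4 * δ)⁻¹ ≤ lam0 ∧ lam0 ≤ δ⁻¹ :=
  dirichlet_eigenvalue_bounds_general a b ha hloc C hC hZint Z hZ δ hδ hδbdd hδpos lam0 hlam0
end

section
/- The spectral gap of a birth-death process is given by the variational formula λ₁ = sup_{w∈𝓦} inf_{i≥0} I_i(w)^{-1}, where 𝓦 = { w : ℤ₊ → ℝ : w is strictly increasing, Σ_i π_i |w_i| < ∞, and π(w) ≥ 0 } and I_i(w) = (1/(μ_i b_i (w_{i+1} − w_i))) Σ_{j≥i+1} μ_j w_j. -/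
/-!
Both formulas are handled for the probability weights `π = μ / Z`, which leave `I_i(w)` unchanged.
Write `Δg_k = g_{k+1} - g_k`.

`sup ≤ λ₁`: write `Var(f) = ∑_{i<j} π_i π_j (f_j - f_i)²` and apply Cauchy–Schwarz along the path
from `i` to `j`: `(f_j - f_i)² ≤ (w_j - w_i) ∑_{i≤k<j} (Δf_k)² / Δw_k`. Exchanging the sums, the
edge `k` gets weight `∑_{i≤k<j} π_i π_j (w_j - w_i) = π(w) π[0,k] - ∑_{i≤k} π_i w_i`, which is at
most `∑_{j>k} π_j w_j ≤ π_k b_k Δw_k / r` for `r = inf_i I_i(w)⁻¹`; hence `r Var(f) ≤ D(f)`.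

`λ₁ ≤ sup`: for `0 < λ < λ₁` solve `π_n b_n Δw_n = -λ ∑_{i≤n} π_i w_i` with `w_0 = -1`. The
partial sums `∑_{i≤n} π_i w_i` stay negative: at the first `n` where this fails, `w` frozen after
`n` would have Rayleigh quotient `D / Var ≤ λ`. Hence `w` increases, `π(w) ≤ 0`, and for the
centred `w`, `∑_{j>i} π_j w_j ≤ -∑_{j≤i} π_j w_j`, i.e. `I_i(w) ≤ 1/λ` for every `i`.
-/

open Finset

noncomputable section

namespace BirthDeath

theorem tsum_add_left_eq_sub {x : ℕ → ℝ} (hx : Summable x) (n : ℕ) :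
    ∑' j, x (n + j) = ∑' i, x i - ∑ i ∈ range n, x i := by
  rw [← hx.sum_add_tsum_nat_add n]
  simp [add_comm]

theorem tsum_ofReal_of_hasSum {x : ℕ → ℝ} {a : ℝ} (hx : ∀ i, 0 ≤ x i) (h : HasSum x a) :
    ∑' i, ENNReal.ofReal (x i) = ENNReal.ofReal a := by
  rw [← ENNReal.ofReal_tsum_of_nonneg hx h.summable, h.tsum_eq]

theorem sq_sub_le_mul_sum_sq_div {f w : ℕ → ℝ} (hw : StrictMono w) {i j : ℕ} (hij : i ≤ j) :
    (f j - f i) ^ 2 ≤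
      (w j - w i) * ∑ k ∈ Ico i j, (f (k + 1) - f k) ^ 2 / (w (k + 1) - w k) := by
  rcases hij.eq_or_lt with rfl | hlt
  · simp
  have h := sq_sum_div_le_sum_sq_div (Ico i j) (fun k => f (k + 1) - f k)
    (g := fun k => w (k + 1) - w k) fun k _ => sub_pos.2 (hw k.lt_succ_self)
  rwa [sum_Ico_sub _ hij, sum_Ico_sub _ hij, div_le_iff₀' (sub_pos.2 (hw hlt))] at h

theorem sum_range_partialSum_mul_sub (x w : ℕ → ℝ) (n : ℕ) :
    ∑ i ∈ range n, (∑ j ∈ range (i + 1), x j) * (w (i + 1) - w i)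
      = (∑ j ∈ range (n + 1), x j) * w n - ∑ i ∈ range (n + 1), x i * w i := by
  induction n with
  | zero => simp
  | succ n ih =>
    rw [sum_range_succ, ih, sum_range_succ x (n + 1), sum_range_succ _ (n + 1)]
    ring

/-- Chen's `I_i(w)`. -/
def chenI (μ b w : ℕ → ℝ) (i : ℕ) : ℝ :=
  (μ i * b i * (w (i + 1) - w i))⁻¹ * ∑' j, μ (i + 1 + j) * w (i + 1 + j)

def rayleighValues (π b : ℕ → ℝ) : Set ℝ :=
  {r | ∃ f : ℕ → ℝ, Summable (fun i => π i * f i) ∧ (∑' i, π i * f i) = 0 ∧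
    Summable (fun i => π i * f i ^ 2) ∧ (∑' i, π i * f i ^ 2) = 1 ∧
    Summable (fun i => π i * b i * (f (i + 1) - f i) ^ 2) ∧
    r = ∑' i, π i * b i * (f (i + 1) - f i) ^ 2}

def chenValues (π b : ℕ → ℝ) : Set ℝ :=
  {r | ∃ w : ℕ → ℝ, StrictMono w ∧ Summable (fun i => π i * |w i|) ∧
    (0 ≤ ∑' i, π i * w i) ∧ r = ⨅ i, (chenI π b w i)⁻¹}

def IsStrictPoincareConst (π b : ℕ → ℝ) (lam : ℝ) : Prop :=
  ∀ (f : ℕ → ℝ) (m s d : ℝ), HasSum (fun i => π i * f i) m →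
    HasSum (fun i => π i * f i ^ 2) s →
    HasSum (fun i => π i * b i * (f (i + 1) - f i) ^ 2) d → m ^ 2 < s → lam * (s - m ^ 2) < d

/-- The terms of the Cauchy–Schwarz bound on `π i * π j * (f j - f i) ^ 2` along the path
from `i` to `j`. -/
def csTerm (π w f : ℕ → ℝ) (i j k : ℕ) : ℝ :=
  if i ≤ k ∧ k < j then
    π i * π j * (w j - w i) * ((f (k + 1) - f k) ^ 2 / (w (k + 1) - w k))
  else 0

/-- The pairs `(w n, ∑ i ≤ n, π i * w i)` for `w 0 = -1` and
`π n * b n * (w (n + 1) - w n) = -lam * ∑ i ≤ n, π i * w i`, the recursion that makes every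
`I_i(w)` equal to `1 / lam` when `π(w) = 0`. -/
def chenPair (π b : ℕ → ℝ) (lam : ℝ) : ℕ → ℝ × ℝ
  | 0 => (-1, -π 0)
  | n + 1 =>
    let w := (chenPair π b lam n).1 - lam * (chenPair π b lam n).2 / (π n * b n)
    (w, (chenPair π b lam n).2 + π (n + 1) * w)

theorem chenI_div_const (μ b w : ℕ → ℝ) {c : ℝ} (hc : c ≠ 0) (i : ℕ) :
    chenI (fun j => μ j / c) b w i = chenI μ b w i := by
  simp only [chenI, div_mul_eq_mul_div, tsum_div_const]
  field_simp

section Weights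

variable {π b f w : ℕ → ℝ} {m s d : ℝ}

theorem hasSum_mul_sub_sq (hπ1 : HasSum π 1) (hm : HasSum (fun i => π i * f i) m)
    (hs : HasSum (fun i => π i * f i ^ 2) s) (c : ℝ) :
    HasSum (fun i => π i * (f i - c) ^ 2) (s - 2 * c * m + c ^ 2) := by
  have h := (hs.sub (hm.mul_left (2 * c))).add (hπ1.mul_left (c ^ 2))
  rw [mul_one] at h
  exact h.congr_fun fun i => by ring

theorem sq_le_of_hasSum (hπ : ∀ i, 0 ≤ π i) (hπ1 : HasSum π 1)
    (hm : HasSum (fun i => π i * f i) m) (hs : HasSum (fun i => π i * f i ^ 2) s) :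
    m ^ 2 ≤ s := by
  have h := (hasSum_mul_sub_sq hπ1 hm hs m).nonneg fun i => mul_nonneg (hπ i) (sq_nonneg _)
  linarith

theorem sq_lt_of_hasSum_of_ne (hπ : ∀ i, 0 < π i) (hπ1 : HasSum π 1)
    (hm : HasSum (fun i => π i * f i) m) (hs : HasSum (fun i => π i * f i ^ 2) s)
    {i j : ℕ} (hij : f i ≠ f j) : m ^ 2 < s := by
  obtain ⟨k, hk⟩ : ∃ k, f k ≠ m := by
    by_contra! h
    exact hij ((h i).trans (h j).symm)
  have h := hasSum_lt (f := fun _ => (0 : ℝ)) (i := k)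
    (fun i => mul_nonneg (hπ i).le (sq_nonneg (f i - m)))
    (mul_pos (hπ k) (pow_two_pos_of_ne_zero (sub_ne_zero.2 hk)))
    hasSum_zero (hasSum_mul_sub_sq hπ1 hm hs m)
  linarith

theorem div_mem_rayleighValues (hπ1 : HasSum π 1) (hm : HasSum (fun i => π i * f i) m)
    (hs : HasSum (fun i => π i * f i ^ 2) s)
    (hd : HasSum (fun i => π i * b i * (f (i + 1) - f i) ^ 2) d) (hV : m ^ 2 < s) :
    d / (s - m ^ 2) ∈ rayleighValues π b := by
  set σ := Real.sqrt (s - m ^ 2)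
  have hσ : σ ^ 2 = s - m ^ 2 := Real.sq_sqrt (by linarith)
  have hσ0 : σ ≠ 0 := (Real.sqrt_pos.2 (by linarith)).ne'
  have h1 : HasSum (fun i => π i * ((f i - m) / σ)) 0 := by
    have h := (hm.sub (hπ1.mul_right m)).div_const σ
    rw [one_mul, sub_self, zero_div] at h
    exact h.congr_fun fun i => by ring
  have h2 : HasSum (fun i => π i * ((f i - m) / σ) ^ 2) 1 := by
    have h := (hasSum_mul_sub_sq hπ1 hm hs m).div_const (σ ^ 2)
    rw [show s - 2 * m * m + m ^ 2 = σ ^ 2 by rw [hσ]; ring, div_self (pow_ne_zero 2 hσ0)] at h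
    exact h.congr_fun fun i => by field_simp
  have h3 : HasSum (fun i => π i * b i * ((f (i + 1) - m) / σ - (f i - m) / σ) ^ 2)
      (d / (s - m ^ 2)) := by
    rw [← hσ]
    exact (hd.div_const (σ ^ 2)).congr_fun fun i => by field_simp; ring
  exact ⟨_, h1.summable, h1.tsum_eq, h2.summable, h2.tsum_eq, h3.summable, h3.tsum_eq.symm⟩

theorem rayleighValues_nonempty (hπ : ∀ i, 0 < π i) (hπ1 : HasSum π 1) :
    (rayleighValues π b).Nonempty := by
  set δ : ℕ → ℝ := fun i => if i = 0 then 1 else 0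
  have h1 : HasSum (fun i => π i * δ i) (π 0 * δ 0) :=
    hasSum_single 0 fun i hi => by simp [δ, hi]
  have h2 : HasSum (fun i => π i * δ i ^ 2) (π 0 * δ 0 ^ 2) :=
    hasSum_single 0 fun i hi => by simp [δ, hi]
  have h3 : HasSum (fun i => π i * b i * (δ (i + 1) - δ i) ^ 2) (π 0 * b 0 * (δ 1 - δ 0) ^ 2) :=
    hasSum_single 0 fun i hi => by simp [δ, hi]
  exact ⟨_, div_mem_rayleighValues hπ1 h1 h2 h3
    (sq_lt_of_hasSum_of_ne hπ hπ1 h1 h2 (i := 0) (j := 1) (by simp [δ]))⟩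

theorem summable_mul_of_summable_mul_abs (hπ : ∀ i, 0 ≤ π i)
    (hw : Summable fun i => π i * |w i|) : Summable fun i => π i * w i :=
  (hw.congr fun i => by rw [abs_mul, abs_of_nonneg (hπ i)]).of_abs

theorem tail_tsum_mul_pos (hπ : ∀ i, 0 < π i) (hw : StrictMono w)
    (hwπ : Summable fun i => π i * w i) (hw0 : 0 ≤ ∑' i, π i * w i) (k : ℕ) :
    0 < ∑' j, π (k + 1 + j) * w (k + 1 + j) := by
  rcases le_or_gt 0 (w (k + 1)) with h | h
  · exact (hwπ.comp_injective (add_right_injective (k + 1))).tsum_pos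
      (fun j => mul_nonneg (hπ _).le (h.trans (hw.monotone (Nat.le_add_right _ _)))) 1
      (mul_pos (hπ _) (h.trans_lt (hw (Nat.lt_succ_self _))))
  · have hneg : ∑ i ∈ range (k + 1), π i * w i < 0 :=
      sum_neg (fun i hi => mul_neg_of_pos_of_neg (hπ i)
        ((hw.monotone (mem_range.1 hi).le).trans_lt h)) ⟨0, by simp⟩
    rw [tsum_add_left_eq_sub hwπ]
    linarith

theorem chenI_pos (hπ : ∀ i, 0 < π i) (hb : ∀ i, 0 < b i) (hw : StrictMono w)
    (hwπ : Summable fun i => π i * w i) (hw0 : 0 ≤ ∑' i, π i * w i) (k : ℕ) :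
    0 < chenI π b w k :=
  mul_pos (inv_pos.2 (mul_pos (mul_pos (hπ k) (hb k)) (sub_pos.2 (hw k.lt_succ_self))))
    (tail_tsum_mul_pos hπ hw hwπ hw0 k)

theorem nonneg_of_mem_chenValues (hπ : ∀ i, 0 < π i) (hb : ∀ i, 0 < b i) {t : ℝ}
    (ht : t ∈ chenValues π b) : 0 ≤ t := by
  obtain ⟨w, hw, hwπ, hw0, rfl⟩ := ht
  exact le_ciInf fun i => (inv_pos.2 (chenI_pos hπ hb hw
    (summable_mul_of_summable_mul_abs (fun i => (hπ i).le) hwπ) hw0 i)).le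

theorem chenValues_nonempty (hπ : ∀ i, 0 < π i) (hπ1 : HasSum π 1) :
    (chenValues π b).Nonempty := by
  have hpos (i : ℕ) : 0 ≤ Real.arctan i := Real.arctan_nonneg.2 i.cast_nonneg
  refine ⟨_, fun i => Real.arctan i, Real.arctan_strictMono.comp Nat.strictMono_cast, ?_,
    tsum_nonneg fun i => mul_nonneg (hπ i).le (hpos i), rfl⟩
  refine .of_nonneg_of_le (fun i => mul_nonneg (hπ i).le (abs_nonneg _)) (fun i => ?_)
    (hπ1.summable.mul_right (Real.pi / 2))
  rw [abs_of_nonneg (hpos i)]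
  exact mul_le_mul_of_nonneg_left (Real.arctan_lt_pi_div_two _).le (hπ i).le

theorem tsum_tsum_ofReal_mul_sub_sq (hπ : ∀ i, 0 ≤ π i) (hπ1 : HasSum π 1)
    (hm : HasSum (fun i => π i * f i) m) (hs : HasSum (fun i => π i * f i ^ 2) s) :
    ∑' i, ∑' j, ENNReal.ofReal (π i * π j * (f j - f i) ^ 2) =
      ENNReal.ofReal (2 * (s - m ^ 2)) := by
  have hrow (i : ℕ) : HasSum (fun j => π i * π j * (f j - f i) ^ 2)
      (π i * (s - 2 * f i * m + f i ^ 2)) :=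
    ((hasSum_mul_sub_sq hπ1 hm hs (f i)).mul_left (π i)).congr_fun fun j => by ring
  have hcol : HasSum (fun i => π i * (s - 2 * f i * m + f i ^ 2)) (2 * (s - m ^ 2)) := by
    have h := ((hπ1.mul_right s).sub (hm.mul_right (2 * m))).add hs
    rw [one_mul, show s - m * (2 * m) + s = 2 * (s - m ^ 2) by ring] at h
    exact h.congr_fun fun i => by ring
  have hterm (i j : ℕ) : 0 ≤ π i * π j * (f j - f i) ^ 2 :=
    mul_nonneg (mul_nonneg (hπ i) (hπ j)) (sq_nonneg _)
  rw [tsum_congr fun i => tsum_ofReal_of_hasSum (hterm i) (hrow i)]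
  exact tsum_ofReal_of_hasSum (fun i => (hrow i).nonneg (hterm i)) hcol

theorem ofReal_sub_sq_eq_tsum_tsum (hπ : ∀ i, 0 ≤ π i) (hπ1 : HasSum π 1)
    (hm : HasSum (fun i => π i * f i) m) (hs : HasSum (fun i => π i * f i ^ 2) s) :
    ENNReal.ofReal (s - m ^ 2) =
      ∑' i, ∑' j, ENNReal.ofReal (if i < j then π i * π j * (f j - f i) ^ 2 else 0) := by
  set u : ℕ → ℕ → ENNReal := fun i j =>
    ENNReal.ofReal (if i < j then π i * π j * (f j - f i) ^ 2 else 0)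
  have hsplit (i j : ℕ) : ENNReal.ofReal (π i * π j * (f j - f i) ^ 2) = u i j + u j i := by
    rcases lt_trichotomy i j with h | rfl | h
    · simp [u, h, h.not_gt]
    · simp [u]
    · simp only [u, if_neg h.not_gt, if_pos h, ENNReal.ofReal_zero, zero_add]
      congr 1
      ring
  have h := tsum_tsum_ofReal_mul_sub_sq hπ hπ1 hm hs
  simp_rw [hsplit, ENNReal.tsum_add] at h
  rw [ENNReal.tsum_comm (f := fun i j => u j i), ← two_mul, ENNReal.ofReal_mul zero_le_two,
    ENNReal.ofReal_ofNat] at h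
  exact (ENNReal.mul_right_inj two_ne_zero ENNReal.ofNat_ne_top).1 h.symm

theorem hasSum_ite_lt_mul_sum (hπ1 : HasSum π 1) {W : ℝ} (hW : HasSum (fun i => π i * w i) W)
    (k : ℕ) :
    HasSum (fun j => if k < j then π j * ∑ i ∈ range (k + 1), π i * (w j - w i) else 0)
      (W * ∑ i ∈ range (k + 1), π i - ∑ i ∈ range (k + 1), π i * w i) := by
  set e : ℕ → ℝ := fun j => π j * ∑ i ∈ range (k + 1), π i * (w j - w i)
  have he_eq (j : ℕ) : e j = π j * w j * ∑ i ∈ range (k + 1), π i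
      - π j * ∑ i ∈ range (k + 1), π i * w i := by
    simp only [e, mul_sub, sum_sub_distrib, ← sum_mul]
    ring
  have he : HasSum e (W * ∑ i ∈ range (k + 1), π i - ∑ i ∈ range (k + 1), π i * w i) := by
    have h := (hW.mul_right (∑ i ∈ range (k + 1), π i)).sub
      (hπ1.mul_right (∑ i ∈ range (k + 1), π i * w i))
    rw [one_mul] at h
    exact h.congr_fun he_eq
  -- the terms `j ≤ k` cancel in pairs
  have hhead : ∑ j ∈ range (k + 1), e j = 0 := by
    simp only [he_eq, sum_sub_distrib, ← sum_mul]
    ring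
  have htail := (hasSum_nat_add_iff' (k + 1)).2 he
  rw [hhead, sub_zero] at htail
  refine (hasSum_nat_add_iff' (k + 1)).1 ?_
  rw [sum_eq_zero fun j hj => if_neg (by simp at hj; omega), sub_zero]
  exact htail.congr_fun fun n => if_pos (by omega)

theorem csTerm_nonneg (hπ : ∀ i, 0 ≤ π i) (hw : Monotone w) (i j k : ℕ) :
    0 ≤ csTerm π w f i j k := by
  unfold csTerm
  split_ifs with hijk
  · exact mul_nonneg (mul_nonneg (mul_nonneg (hπ i) (hπ j)) (sub_nonneg.2 (hw (by omega))))
      (div_nonneg (sq_nonneg _) (sub_nonneg.2 (hw k.le_succ)))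
  · exact le_rfl

theorem ofReal_le_tsum_csTerm (hπ : ∀ i, 0 ≤ π i) (hw : StrictMono w) (i j : ℕ) :
    ENNReal.ofReal (if i < j then π i * π j * (f j - f i) ^ 2 else 0)
      ≤ ∑' k, ENNReal.ofReal (csTerm π w f i j k) := by
  split_ifs with hij
  · rw [tsum_eq_sum (s := Ico i j) fun k hk => by simp [csTerm, mem_Ico.not.1 hk],
      ← ENNReal.ofReal_sum_of_nonneg fun k _ => csTerm_nonneg hπ hw.monotone i j k]
    refine ENNReal.ofReal_le_ofReal ?_
    calc π i * π j * (f j - f i) ^ 2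
        ≤ π i * π j *
            ((w j - w i) * ∑ k ∈ Ico i j, (f (k + 1) - f k) ^ 2 / (w (k + 1) - w k)) :=
          mul_le_mul_of_nonneg_left (sq_sub_le_mul_sum_sq_div hw hij.le)
            (mul_nonneg (hπ i) (hπ j))
      _ = ∑ k ∈ Ico i j, csTerm π w f i j k := by
          rw [mul_sum, mul_sum]
          refine sum_congr rfl fun k hk => ?_
          rw [csTerm, if_pos (mem_Ico.1 hk)]
          ring
  · simp

theorem tsum_tsum_ofReal_csTerm (hπ : ∀ i, 0 ≤ π i) (hπ1 : HasSum π 1) (hw : Monotone w)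
    {W : ℝ} (hW : HasSum (fun i => π i * w i) W) (k : ℕ) :
    ∑' j, ∑' i, ENNReal.ofReal (csTerm π w f i j k) =
      ENNReal.ofReal ((f (k + 1) - f k) ^ 2 / (w (k + 1) - w k) *
        (W * ∑ i ∈ range (k + 1), π i - ∑ i ∈ range (k + 1), π i * w i)) := by
  set h := (f (k + 1) - f k) ^ 2 / (w (k + 1) - w k)
  have hrow (j : ℕ) : ∑ i ∈ range (k + 1), csTerm π w f i j k =
      h * if k < j then π j * ∑ i ∈ range (k + 1), π i * (w j - w i) else 0 := by
    split_ifs with hkj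
    · rw [mul_sum, mul_sum]
      refine sum_congr rfl fun i hi => ?_
      rw [csTerm, if_pos (show i ≤ k ∧ k < j from ⟨Nat.lt_succ_iff.1 (mem_range.1 hi), hkj⟩)]
      ring
    · simp [csTerm, hkj]
  have hcol (j : ℕ) : ∑' i, ENNReal.ofReal (csTerm π w f i j k) = ENNReal.ofReal
      (h * if k < j then π j * ∑ i ∈ range (k + 1), π i * (w j - w i) else 0) := by
    rw [tsum_eq_sum (s := range (k + 1)) fun i hi => by
        simp [csTerm, show ¬i ≤ k by simpa [Nat.lt_succ_iff] using hi],
      ← ENNReal.ofReal_sum_of_nonneg fun i _ => csTerm_nonneg hπ hw i j k, hrow]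
  rw [tsum_congr hcol]
  exact tsum_ofReal_of_hasSum (fun j => hrow j ▸ sum_nonneg fun i _ => csTerm_nonneg hπ hw i j k)
    ((hasSum_ite_lt_mul_sum hπ1 hW k).mul_left h)

theorem mul_sub_sq_le_of_tail_le (hπ : ∀ i, 0 ≤ π i) (hπ1 : HasSum π 1) (hb : ∀ i, 0 ≤ b i)
    (hw : StrictMono w) (hwπ : Summable fun i => π i * w i) (hw0 : 0 ≤ ∑' i, π i * w i)
    (hm : HasSum (fun i => π i * f i) m) (hs : HasSum (fun i => π i * f i ^ 2) s)
    (hd : HasSum (fun i => π i * b i * (f (i + 1) - f i) ^ 2) d) {r : ℝ} (hr : 0 < r)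
    (htail : ∀ k, r * ∑' j, π (k + 1 + j) * w (k + 1 + j) ≤ π k * b k * (w (k + 1) - w k)) :
    r * (s - m ^ 2) ≤ d := by
  have hD (k : ℕ) : 0 ≤ π k * b k * (f (k + 1) - f k) ^ 2 :=
    mul_nonneg (mul_nonneg (hπ k) (hb k)) (sq_nonneg _)
  have hcol (k : ℕ) : ∑' j, ∑' i, ENNReal.ofReal (csTerm π w f i j k)
      ≤ ENNReal.ofReal (π k * b k * (f (k + 1) - f k) ^ 2 / r) := by
    rw [tsum_tsum_ofReal_csTerm hπ hπ1 hw.monotone hwπ.hasSum k]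
    refine ENNReal.ofReal_le_ofReal ?_
    have hΔw : 0 < w (k + 1) - w k := sub_pos.2 (hw k.lt_succ_self)
    have hM : ∑ i ∈ range (k + 1), π i ≤ 1 := sum_le_hasSum _ (fun i _ => hπ i) hπ1
    have hT : (∑' i, π i * w i) * ∑ i ∈ range (k + 1), π i - ∑ i ∈ range (k + 1), π i * w i
        ≤ π k * b k * (w (k + 1) - w k) / r := by
      have hk := htail k
      rw [tsum_add_left_eq_sub hwπ] at hk
      rw [le_div_iff₀' hr]
      nlinarith [mul_nonneg hw0 (sub_nonneg.2 hM)]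
    calc _ ≤ (f (k + 1) - f k) ^ 2 / (w (k + 1) - w k) * (π k * b k * (w (k + 1) - w k) / r) :=
          mul_le_mul_of_nonneg_left hT (div_nonneg (sq_nonneg _) hΔw.le)
      _ = π k * b k * (f (k + 1) - f k) ^ 2 / r := by field_simp
  have key : ENNReal.ofReal (s - m ^ 2) ≤ ENNReal.ofReal (d / r) :=
    calc ENNReal.ofReal (s - m ^ 2)
        = ∑' i, ∑' j, ENNReal.ofReal (if i < j then π i * π j * (f j - f i) ^ 2 else 0) :=
          ofReal_sub_sq_eq_tsum_tsum hπ hπ1 hm hs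
      _ ≤ ∑' i, ∑' j, ∑' k, ENNReal.ofReal (csTerm π w f i j k) :=
          ENNReal.tsum_le_tsum fun i => ENNReal.tsum_le_tsum fun j =>
            ofReal_le_tsum_csTerm hπ hw i j
      _ = ∑' k, ∑' j, ∑' i, ENNReal.ofReal (csTerm π w f i j k) := by
          rw [ENNReal.tsum_comm, tsum_congr fun j => ENNReal.tsum_comm]
          exact ENNReal.tsum_comm
      _ ≤ ∑' k, ENNReal.ofReal (π k * b k * (f (k + 1) - f k) ^ 2 / r) :=
          ENNReal.tsum_le_tsum hcol
      _ = ENNReal.ofReal (d / r) :=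
          tsum_ofReal_of_hasSum (fun k => div_nonneg (hD k) hr.le) (hd.div_const r)
  rwa [ENNReal.ofReal_le_ofReal_iff (div_nonneg (hd.nonneg hD) hr.le), le_div_iff₀' hr] at key

theorem iInf_inv_chenI_mul_le (hπ : ∀ i, 0 < π i) (hπ1 : HasSum π 1) (hb : ∀ i, 0 < b i)
    (hw : StrictMono w) (hwπ : Summable fun i => π i * w i) (hw0 : 0 ≤ ∑' i, π i * w i)
    (hm : HasSum (fun i => π i * f i) m) (hs : HasSum (fun i => π i * f i ^ 2) s)
    (hd : HasSum (fun i => π i * b i * (f (i + 1) - f i) ^ 2) d) :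
    (⨅ i, (chenI π b w i)⁻¹) * (s - m ^ 2) ≤ d := by
  set r := ⨅ i, (chenI π b w i)⁻¹
  rcases le_or_gt r 0 with hr | hr
  · exact (mul_nonpos_of_nonpos_of_nonneg hr
      (sub_nonneg.2 (sq_le_of_hasSum (fun i => (hπ i).le) hπ1 hm hs))).trans
      (hd.nonneg fun i => mul_nonneg (mul_nonneg (hπ i).le (hb i).le) (sq_nonneg _))
  refine mul_sub_sq_le_of_tail_le (fun i => (hπ i).le) hπ1 (fun i => (hb i).le) hw hwπ hw0
    hm hs hd hr fun k => ?_
  have hle : r ≤ (chenI π b w k)⁻¹ := ciInf_le ⟨0, by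
    rintro _ ⟨i, rfl⟩
    exact (inv_pos.2 (chenI_pos hπ hb hw hwπ hw0 i)).le⟩ k
  rwa [chenI, mul_inv, inv_inv, ← div_eq_mul_inv,
    le_div_iff₀ (tail_tsum_mul_pos hπ hw hwπ hw0 k)] at hle

theorem hasSum_mul_of_eq_const (hπ1 : HasSum π 1) {g : ℕ → ℝ} {n : ℕ} {c : ℝ}
    (hg : ∀ i, n ≤ i → g i = c) :
    HasSum (fun i => π i * g i) (∑ i ∈ range n, π i * g i + c * (1 - ∑ i ∈ range n, π i)) := by
  have hfin : HasSum (fun i => π i * g i - c * π i) (∑ i ∈ range n, (π i * g i - c * π i)) :=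
    hasSum_sum_of_ne_finset_zero fun i hi => by
      rw [hg i (by simpa using hi)]
      ring
  have h := hfin.add (hπ1.mul_left c)
  rw [sum_sub_distrib, ← mul_sum, mul_one,
    show ∀ x y : ℝ, x - c * y + c = x + c * (1 - y) from fun x y => by ring] at h
  exact h.congr_fun fun i => by ring

theorem exists_hasSum_truncation_le {lam : ℝ} (hlam : 0 ≤ lam) (hπ : ∀ i, 0 ≤ π i)
    (hπ1 : HasSum π 1) {K : ℕ}
    (hrec : ∀ i < K, π i * b i * (w (i + 1) - w i) = -lam * ∑ j ∈ range (i + 1), π j * w j)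
    (hmono : ∀ i ≤ K, w i ≤ w K) (hwK : 0 ≤ w K) (hSK : 0 ≤ ∑ i ∈ range (K + 1), π i * w i) :
    ∃ m s d, HasSum (fun i => π i * w (min i K)) m ∧
      HasSum (fun i => π i * w (min i K) ^ 2) s ∧
      HasSum (fun i => π i * b i * (w (min (i + 1) K) - w (min i K)) ^ 2) d ∧
      d ≤ lam * (s - m ^ 2) := by
  set S := ∑ i ∈ range (K + 1), π i * w i
  set M := ∑ i ∈ range (K + 1), π i
  set Q := ∑ i ∈ range (K + 1), π i * w i ^ 2
  have hM : M ≤ 1 := sum_le_hasSum _ (fun i _ => hπ i) hπ1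
  have hconst (i : ℕ) (hi : K + 1 ≤ i) : w (min i K) = w K := by rw [min_eq_right (by omega)]
  have hhead (i : ℕ) (hi : i ∈ range (K + 1)) : w (min i K) = w i := by
    rw [min_eq_left (Nat.lt_succ_iff.1 (mem_range.1 hi))]
  have hm : HasSum (fun i => π i * w (min i K)) (S + w K * (1 - M)) := by
    have h := hasSum_mul_of_eq_const hπ1 hconst
    rwa [(sum_congr rfl fun i hi => by rw [hhead i hi] :
      ∑ i ∈ range (K + 1), π i * w (min i K) = S)] at h
  have hs : HasSum (fun i => π i * w (min i K) ^ 2) (Q + w K ^ 2 * (1 - M)) := by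
    have h := hasSum_mul_of_eq_const (g := fun i => w (min i K) ^ 2) (c := w K ^ 2) hπ1
      fun i hi => by rw [hconst i hi]
    rwa [(sum_congr rfl fun i hi => by rw [hhead i hi] :
      ∑ i ∈ range (K + 1), π i * w (min i K) ^ 2 = Q)] at h
  have hd : HasSum (fun i => π i * b i * (w (min (i + 1) K) - w (min i K)) ^ 2)
      (lam * (Q - S * w K)) := by
    have h : HasSum (fun i => π i * b i * (w (min (i + 1) K) - w (min i K)) ^ 2)
        (∑ i ∈ range K, π i * b i * (w (min (i + 1) K) - w (min i K)) ^ 2) :=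
      hasSum_sum_of_ne_finset_zero fun i hi => by
        simp only [mem_range, not_lt] at hi
        rw [min_eq_right (by omega), min_eq_right hi, sub_self]
        ring
    have hsum : ∑ i ∈ range K, π i * b i * (w (min (i + 1) K) - w (min i K)) ^ 2
        = lam * (Q - S * w K) :=
      calc _ = ∑ i ∈ range K, -lam * ((∑ j ∈ range (i + 1), π j * w j) * (w (i + 1) - w i)) :=
            sum_congr rfl fun i hi => by
              rw [min_eq_left (mem_range.1 hi), min_eq_left (mem_range.1 hi).le, pow_two,
                ← mul_assoc, hrec i (mem_range.1 hi), mul_assoc]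
        _ = lam * (Q - S * w K) := by
            rw [← mul_sum, sum_range_partialSum_mul_sub]
            simp only [Q, S, pow_two, mul_assoc]
            ring
    rwa [hsum] at h
  refine ⟨_, _, _, hm, hs, hd, ?_⟩
  have hmean : 0 ≤ S + w K * (1 - M) := add_nonneg hSK (mul_nonneg hwK (sub_nonneg.2 hM))
  have hgap : 0 ≤ w K - (S + w K * (1 - M)) := by
    have : 0 ≤ ∑ i ∈ range (K + 1), π i * (w K - w i) :=
      sum_nonneg fun i hi =>
        mul_nonneg (hπ i) (sub_nonneg.2 (hmono i (Nat.lt_succ_iff.1 (mem_range.1 hi))))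
    simp only [mul_sub, sum_sub_distrib, ← sum_mul] at this
    linarith
  nlinarith [mul_nonneg hlam (mul_nonneg hmean hgap)]

theorem lt_succ_of_partialSum_neg (hπ : ∀ i, 0 < π i) (hb : ∀ i, 0 < b i) {lam : ℝ}
    (hlam : 0 < lam) {n : ℕ}
    (hrec : π n * b n * (w (n + 1) - w n) = -lam * ∑ i ∈ range (n + 1), π i * w i)
    (hS : ∑ i ∈ range (n + 1), π i * w i < 0) : w n < w (n + 1) := by
  have h : 0 < π n * b n * (w (n + 1) - w n) := by
    rw [hrec]
    nlinarith
  exact sub_pos.1 ((pos_iff_pos_of_mul_pos h).1 (mul_pos (hπ n) (hb n)))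

theorem partialSum_neg_of_rec (hπ : ∀ i, 0 < π i) (hπ1 : HasSum π 1) (hb : ∀ i, 0 < b i)
    {lam : ℝ} (hlam : 0 < lam) (hpoinc : IsStrictPoincareConst π b lam) (hw0 : w 0 < 0)
    (hrec : ∀ n, π n * b n * (w (n + 1) - w n) = -lam * ∑ i ∈ range (n + 1), π i * w i)
    (n : ℕ) : ∑ i ∈ range (n + 1), π i * w i < 0 := by
  induction n using Nat.strong_induction_on with
  | _ K ih =>
  by_contra! hSK
  have hmono (i : ℕ) (hi : i ≤ K) : w i ≤ w K := by
    have hΔ : 0 ≤ ∑ l ∈ Ico i K, (w (l + 1) - w l) := sum_nonneg fun l hl =>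
      (sub_pos.2 (lt_succ_of_partialSum_neg hπ hb hlam (hrec l) (ih l (mem_Ico.1 hl).2))).le
    rw [sum_Ico_sub w hi] at hΔ
    linarith
  obtain ⟨K, rfl⟩ : ∃ K', K = K' + 1 :=
    Nat.exists_eq_succ_of_ne_zero fun hK => by
      subst hK
      simp only [zero_add, sum_range_one] at hSK
      nlinarith [hπ 0]
  have hwK : 0 < w (K + 1) := by
    rw [sum_range_succ] at hSK
    have := ih K K.lt_succ_self
    exact (pos_iff_pos_of_mul_pos (by linarith : 0 < π (K + 1) * w (K + 1))).1 (hπ _)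
  obtain ⟨m, s, d, hm, hs, hd, hle⟩ := exists_hasSum_truncation_le hlam.le (fun i => (hπ i).le)
    hπ1 (fun i _ => hrec i) hmono hwK.le hSK
  have hvar : m ^ 2 < s := sq_lt_of_hasSum_of_ne hπ hπ1 hm hs (i := 0) (j := K + 1) (by
    simp only [Nat.zero_min, min_self]
    linarith)
  exact (hpoinc _ m s d hm hs hd hvar).not_ge hle

theorem exists_hasSum_nonpos_of_partialSum_neg (hπ : ∀ i, 0 ≤ π i) (hπ1 : HasSum π 1)
    (hw : Monotone w) (hS : ∀ n, ∑ i ∈ range (n + 1), π i * w i < 0) :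
    ∃ W ≤ 0, HasSum (fun i => π i * w i) W := by
  have hw0 : w 0 < 0 := neg_of_mul_neg_right (by simpa using hS 0) (hπ 0)
  have h : Summable fun i => π i * (w i - w 0) := by
    refine summable_of_sum_range_le (c := -w 0)
      (fun i => mul_nonneg (hπ i) (sub_nonneg.2 (hw i.zero_le))) fun n => ?_
    rcases n with _ | n
    · simpa using hw0.le
    · have hM := sum_le_hasSum (range (n + 1)) (fun i _ => hπ i) hπ1
      simp only [mul_sub, sum_sub_distrib, ← sum_mul]
      nlinarith [hS n]
  have hwπ : Summable fun i => π i * w i :=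
    (h.add (hπ1.summable.mul_right (w 0))).congr fun i => by ring
  refine ⟨_, le_of_tendsto' hwπ.hasSum.tendsto_sum_nat fun n => ?_, hwπ.hasSum⟩
  rcases n with _ | n
  · simp
  · exact (hS n).le

theorem exists_chen_recursion (hπ : ∀ i, 0 < π i) (hb : ∀ i, 0 < b i) (lam : ℝ) :
    ∃ w : ℕ → ℝ, w 0 = -1 ∧
      ∀ n, π n * b n * (w (n + 1) - w n) = -lam * ∑ i ∈ range (n + 1), π i * w i := by
  have hS (n : ℕ) :
      (chenPair π b lam n).2 = ∑ i ∈ range (n + 1), π i * (chenPair π b lam i).1 := by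
    induction n with
    | zero => simp [chenPair]
    | succ n ih =>
      rw [sum_range_succ, ← ih]
      rfl
  refine ⟨fun n => (chenPair π b lam n).1, rfl, fun n => ?_⟩
  rw [← hS n]
  simp only [chenPair]
  rw [sub_sub_cancel_left, mul_neg, mul_div_cancel₀ _ (mul_pos (hπ n) (hb n)).ne', neg_mul]

theorem exists_mem_chenValues_ge (hπ : ∀ i, 0 < π i) (hπ1 : HasSum π 1) (hb : ∀ i, 0 < b i)
    {lam : ℝ} (hlam : 0 < lam) (hpoinc : IsStrictPoincareConst π b lam) :
    ∃ t ∈ chenValues π b, lam ≤ t := by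
  obtain ⟨w, hw0, hrec⟩ := exists_chen_recursion hπ hb lam
  have hS := partialSum_neg_of_rec hπ hπ1 hb hlam hpoinc (by rw [hw0]; norm_num) hrec
  have hw : StrictMono w :=
    strictMono_nat_of_lt_succ fun n => lt_succ_of_partialSum_neg hπ hb hlam (hrec n) (hS n)
  obtain ⟨W, hW, hwπ⟩ :=
    exists_hasSum_nonpos_of_partialSum_neg (fun i => (hπ i).le) hπ1 hw.monotone hS
  have hv : HasSum (fun i => π i * (w i - W)) 0 := by
    have h := hwπ.sub (hπ1.mul_right W)
    rw [one_mul, sub_self] at h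
    exact h.congr_fun fun i => by ring
  have hvmono : StrictMono fun i => w i - W := fun i j hij => sub_lt_sub_right (hw hij) W
  refine ⟨_, ⟨fun i => w i - W, hvmono,
    hv.summable.abs.congr fun i => by rw [abs_mul, abs_of_pos (hπ i)], hv.tsum_eq.ge, rfl⟩,
    le_ciInf fun i => ?_⟩
  rw [le_inv_comm₀ hlam (chenI_pos hπ hb hvmono hv.summable hv.tsum_eq.ge i)]
  set S := ∑ j ∈ range (i + 1), π j * w j
  have hSi : S < 0 := hS i
  have htail : ∑' j, π (i + 1 + j) * (w (i + 1 + j) - W) ≤ -S := by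
    have hWM := mul_nonpos_of_nonpos_of_nonneg hW
      (sum_nonneg fun j (_ : j ∈ range (i + 1)) => (hπ j).le)
    rw [tsum_add_left_eq_sub hv.summable, hv.tsum_eq]
    simp only [S, mul_sub, sum_sub_distrib, ← sum_mul]
    linarith
  calc chenI π b (fun i => w i - W) i
      = (-lam * S)⁻¹ * ∑' j, π (i + 1 + j) * (w (i + 1 + j) - W) := by
        rw [chenI, sub_sub_sub_cancel_right, hrec i]
    _ ≤ (-lam * S)⁻¹ * -S := mul_le_mul_of_nonneg_left htail (inv_nonneg.2 (by nlinarith))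
    _ = lam⁻¹ := by field_simp [hSi.ne]

theorem sInf_rayleighValues_eq_sSup_chenValues (hπ : ∀ i, 0 < π i) (hπ1 : HasSum π 1)
    (hb : ∀ i, 0 < b i) : sInf (rayleighValues π b) = sSup (chenValues π b) := by
  have hle (t : ℝ) (ht : t ∈ chenValues π b) (r : ℝ) (hr : r ∈ rayleighValues π b) : t ≤ r := by
    obtain ⟨w, hw, hwπ, hw0, rfl⟩ := ht
    obtain ⟨f, hf1, hf1', hf2, hf2', hD, rfl⟩ := hr
    simpa using iInf_inv_chenI_mul_le (m := 0) (s := 1) hπ hπ1 hb hw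
      (summable_mul_of_summable_mul_abs (fun i => (hπ i).le) hwπ) hw0
      (hf1' ▸ hf1.hasSum) (hf2' ▸ hf2.hasSum) hD.hasSum
  have hbdd_below : BddBelow (rayleighValues π b) := ⟨0, by
    rintro _ ⟨f, -, -, -, -, -, rfl⟩
    exact tsum_nonneg fun i => mul_nonneg (mul_nonneg (hπ i).le (hb i).le) (sq_nonneg _)⟩
  obtain ⟨r₀, hr₀⟩ := rayleighValues_nonempty (b := b) hπ hπ1
  obtain ⟨t₀, ht₀⟩ := chenValues_nonempty (b := b) hπ hπ1
  have hbdd : BddAbove (chenValues π b) := ⟨r₀, fun t ht => hle t ht r₀ hr₀⟩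
  refine le_antisymm (le_of_forall_lt_imp_le_of_dense fun lam hlam => ?_)
    (csSup_le ⟨t₀, ht₀⟩ fun t ht => le_csInf ⟨r₀, hr₀⟩ (hle t ht))
  rcases le_or_gt lam 0 with hlam0 | hlam0
  · exact hlam0.trans ((nonneg_of_mem_chenValues hπ hb ht₀).trans (le_csSup hbdd ht₀))
  obtain ⟨t, ht, hlt⟩ := exists_mem_chenValues_ge hπ hπ1 hb hlam0 fun f m s d hm hs hd hvar => by
    rw [← lt_div_iff₀ (sub_pos.2 hvar)]
    exact hlam.trans_le (csInf_le hbdd_below (div_mem_rayleighValues hπ1 hm hs hd hvar))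
  exact hlt.trans (le_csSup hbdd ht)

end Weights

end BirthDeath

end

/-- Chen (1996): variational formula for the spectral gap of a birth-death process:
`λ₁ = sup_{w ∈ 𝓦} inf_{i ≥ 0} I_i(w)⁻¹`, where
`𝓦 = {w : w strictly increasing, Σ πᵢ|wᵢ| < ∞, π(w) ≥ 0}` and
`I_i(w) = (μᵢ bᵢ (w_{i+1} - wᵢ))⁻¹ Σ_{j ≥ i+1} μⱼ wⱼ`. -/
theorem spectral_gap_variational_formula_birth_death
    (b a : ℕ → ℝ) (hb : ∀ i, 0 < b i) (ha : ∀ i, 0 < a (i + 1))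
    (mu : ℕ → ℝ) (hmu0 : mu 0 = 1)
    (hmurec : ∀ n, mu (n + 1) = mu n * b n / a (n + 1))
    (hmusum : Summable mu)
    (Z : ℝ) (hZ : Z = ∑' n, mu n)
    (pi : ℕ → ℝ) (hpi : ∀ i, pi i = mu i / Z)
    (lam1 : ℝ)
    (hlam1 : lam1 = sInf { r : ℝ | ∃ f : ℕ → ℝ,
      Summable (fun i => pi i * f i) ∧ (∑' i, pi i * f i) = 0 ∧
      Summable (fun i => pi i * f i ^ 2) ∧ (∑' i, pi i * f i ^ 2) = 1 ∧
      Summable (fun i => pi i * b i * (f (i + 1) - f i) ^ 2) ∧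
      r = ∑' i, pi i * b i * (f (i + 1) - f i) ^ 2 }) :
    lam1 = sSup { r : ℝ | ∃ w : ℕ → ℝ,
      StrictMono w ∧
      Summable (fun i => pi i * |w i|) ∧
      (0 ≤ ∑' i, pi i * w i) ∧
      r = ⨅ i : ℕ,
        ((mu i * b i * (w (i + 1) - w i))⁻¹ *
          ∑' j : ℕ, mu (i + 1 + j) * w (i + 1 + j))⁻¹ } := by
  have hmu (n : ℕ) : 0 < mu n := by
    induction n with
    | zero => exact hmu0 ▸ one_pos
    | succ n ih => exact (hmurec n).symm ▸ div_pos (mul_pos ih (hb n)) (ha n)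
  have hZ0 : 0 < Z := hZ ▸ hmusum.tsum_pos (fun n => (hmu n).le) 0 (hmu 0)
  have hπ1 : HasSum (fun i => mu i / Z) 1 := by
    simpa [← hZ, div_self hZ0.ne'] using hmusum.hasSum.div_const Z
  obtain rfl : pi = fun i => mu i / Z := funext hpi
  have key := BirthDeath.sInf_rayleighValues_eq_sSup_chenValues
    (fun i => div_pos (hmu i) hZ0) hπ1 hb
  simp only [BirthDeath.chenValues, BirthDeath.chenI_div_const mu b _ hZ0.ne'] at key
  exact hlam1.trans key
end

section
/- The spectral gap λ₁ of a birth-death process is strictly positive if and only if sup_{n≥1} μ[n,∞) · Σ_{j=0}^{n-1} 1/(μ_j b_j) < ∞. -/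
/-!
Write `s n = ∑_{j<n} 1/(μⱼ bⱼ)` for the natural scale and `M n = μ[n,∞)`. If
`B = sup_n M n * s n` is finite, Cauchy–Schwarz with the weights `μⱼ bⱼ √(s (j+1))` and two
telescoping sums (one in `√s`, one in `√M`) give the discrete Hardy inequality
`∑ μᵢ (fᵢ - f₀)² ≤ 4B ∑ μⱼ bⱼ (fⱼ₊₁ - fⱼ)²`; for normalized `f` the left side is `Z (1 + f₀²)`,
so `λ₁ ≥ 1/(4B)`. Conversely, the scale stopped at `n + 1` vanishes at `0` and is constant on
`[n+1, ∞)`, so its variance is at least `π₀ π[n+1,∞) s(n+1)²` while its energy is `s(n+1)/Z`;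
hence `λ₁ M(n+1) s(n+1) ≤ Z` for every `n`.
-/

open Finset

noncomputable def naturalScale (w : ℕ → ℝ) (n : ℕ) : ℝ := ∑ j ∈ range n, (w j)⁻¹

noncomputable def tailSum (p : ℕ → ℝ) (n : ℕ) : ℝ := ∑' j, p (j + n)

lemma sub_div_sqrt_le_two_mul {s t : ℝ} (hs : 0 ≤ s) (ht : 0 < t) :
    (t - s) / √t ≤ 2 * (√t - √s) := by
  rw [div_le_iff₀ (Real.sqrt_pos.2 ht)]
  nlinarith [Real.sq_sqrt hs, Real.sq_sqrt ht.le, sq_nonneg (√t - √s)]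

lemma sum_range_sub_div_sqrt_le {x : ℕ → ℝ} (hx : ∀ k, 0 ≤ x k) (hx' : ∀ k, 0 < x (k + 1))
    (n : ℕ) : ∑ k ∈ range n, (x (k + 1) - x k) / √(x (k + 1)) ≤ 2 * √(x n) :=
  calc _ ≤ ∑ k ∈ range n, 2 * (√(x (k + 1)) - √(x k)) :=
        sum_le_sum fun k _ => sub_div_sqrt_le_two_mul (hx k) (hx' k)
    _ = 2 * (√(x n) - √(x 0)) := by rw [← mul_sum, sum_range_sub (fun k => √(x k))]
    _ ≤ 2 * √(x n) := by linarith [Real.sqrt_nonneg (x 0)]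

lemma sum_Ico_sub_div_sqrt_le {y : ℕ → ℝ} (hy : ∀ k, 0 < y k) (m n : ℕ) :
    ∑ k ∈ Ico m n, (y k - y (k + 1)) / √(y k) ≤ 2 * √(y m) := by
  rcases le_or_gt m n with hmn | hnm
  · calc _ ≤ ∑ k ∈ Ico m n, -(2 * (√(y (k + 1)) - √(y k))) :=
          sum_le_sum fun k _ => by
            linarith [sub_div_sqrt_le_two_mul (hy (k + 1)).le (hy k)]
      _ = 2 * (√(y m) - √(y n)) := by
          rw [sum_neg_distrib, ← mul_sum, sum_Ico_sub (fun k => √(y k)) hmn]; ring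
      _ ≤ 2 * √(y m) := by linarith [Real.sqrt_nonneg (y n)]
  · rw [Ico_eq_empty_of_le hnm.le, sum_empty]
    positivity

section Hardy

variable {w : ℕ → ℝ}

lemma naturalScale_nonneg (hw : ∀ j, 0 < w j) (n : ℕ) : 0 ≤ naturalScale w n :=
  sum_nonneg fun j _ => (inv_pos.2 (hw j)).le

lemma naturalScale_succ_pos (hw : ∀ j, 0 < w j) (n : ℕ) : 0 < naturalScale w (n + 1) :=
  sum_pos (fun j _ => inv_pos.2 (hw j)) nonempty_range_add_one

lemma naturalScale_succ_sub (n : ℕ) : naturalScale w (n + 1) - naturalScale w n = (w n)⁻¹ :=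
  sum_range_succ_sub_sum _

/-- Cauchy–Schwarz with the weights `w j * √(naturalScale w (j + 1))`, whose reciprocals
telescope against `√(naturalScale w)`. -/
lemma sq_sub_le_two_sqrt_naturalScale_mul (hw : ∀ j, 0 < w j) (f : ℕ → ℝ) (i : ℕ) :
    (f i - f 0) ^ 2 ≤ 2 * √(naturalScale w i) *
      ∑ j ∈ range i, w j * √(naturalScale w (j + 1)) * (f (j + 1) - f j) ^ 2 := by
  set v := fun j => w j * √(naturalScale w (j + 1))
  have hv : ∀ j, 0 < v j := fun j =>
    mul_pos (hw j) (Real.sqrt_pos.2 (naturalScale_succ_pos hw j))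
  have hinv : ∑ j ∈ range i, (v j)⁻¹ ≤ 2 * √(naturalScale w i) := by
    convert sum_range_sub_div_sqrt_le (naturalScale_nonneg hw) (naturalScale_succ_pos hw) i
      using 2 with j
    rw [naturalScale_succ_sub, mul_inv, div_eq_mul_inv]
  calc (f i - f 0) ^ 2 = (∑ j ∈ range i, (f (j + 1) - f j)) ^ 2 := by rw [sum_range_sub]
    _ ≤ (∑ j ∈ range i, (v j)⁻¹) * ∑ j ∈ range i, v j * (f (j + 1) - f j) ^ 2 :=
        sum_sq_le_sum_mul_sum_of_sq_le_mul _ (fun j _ => (inv_pos.2 (hv j)).le)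
          (fun j _ => mul_nonneg (hv j).le (sq_nonneg _))
          fun j _ => by rw [← mul_assoc, inv_mul_cancel₀ (hv j).ne', one_mul]
    _ ≤ _ := mul_le_mul_of_nonneg_right hinv
        (sum_nonneg fun j _ => mul_nonneg (hv j).le (sq_nonneg _))

/-- `M` stands for the tail sums of the weights, so `M i - M (i + 1)` is the weight at `i`. -/
lemma hardy_inequality_range {M : ℕ → ℝ} {B : ℝ} (hw : ∀ j, 0 < w j) (hM : ∀ i, 0 < M i)
    (hM_anti : Antitone M) (hB : ∀ n, M n * naturalScale w n ≤ B) (f : ℕ → ℝ) (N : ℕ) :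
    ∑ i ∈ range N, (M i - M (i + 1)) * (f i - f 0) ^ 2 ≤
      4 * B * ∑ j ∈ range N, w j * (f (j + 1) - f j) ^ 2 := by
  have hB0 : 0 ≤ B := by simpa [naturalScale] using hB 0
  set U := naturalScale w
  set e := fun j => w j * √(U (j + 1)) * (f (j + 1) - f j) ^ 2
  have he : ∀ j, 0 ≤ e j := fun j =>
    mul_nonneg (mul_nonneg (hw j).le (Real.sqrt_nonneg _)) (sq_nonneg _)
  have hmass : ∀ i, 0 ≤ M i - M (i + 1) := fun i => sub_nonneg.2 (hM_anti i.le_succ)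
  have hUM : ∀ n, √(U n) * √(M n) ≤ √B := fun n => by
    rw [← Real.sqrt_mul (naturalScale_nonneg hw n), mul_comm]
    exact Real.sqrt_le_sqrt (hB n)
  have hinner : ∀ j, ∑ i ∈ Ico (j + 1) N, (M i - M (i + 1)) * √(U i) ≤
      2 * √B * √(M (j + 1)) := fun j =>
    calc _ ≤ ∑ i ∈ Ico (j + 1) N, √B * ((M i - M (i + 1)) / √(M i)) :=
          sum_le_sum fun i _ => by
            have hU : √(U i) ≤ √B / √(M i) :=
              (le_div_iff₀ (Real.sqrt_pos.2 (hM i))).2 (hUM i)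
            calc _ ≤ (M i - M (i + 1)) * (√B / √(M i)) :=
                  mul_le_mul_of_nonneg_left hU (hmass i)
              _ = _ := by ring
      _ ≤ √B * (2 * √(M (j + 1))) := by
          rw [← mul_sum]
          exact mul_le_mul_of_nonneg_left (sum_Ico_sub_div_sqrt_le hM _ _) (Real.sqrt_nonneg B)
      _ = _ := by ring
  calc _ ≤ ∑ i ∈ range N, ∑ j ∈ range i, (M i - M (i + 1)) * 2 * √(U i) * e j :=
        sum_le_sum fun i _ =>
          calc _ ≤ (M i - M (i + 1)) * (2 * √(U i) * ∑ j ∈ range i, e j) :=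
                mul_le_mul_of_nonneg_left (sq_sub_le_two_sqrt_naturalScale_mul hw f i) (hmass i)
            _ = _ := by
                simp only [mul_sum]
                exact sum_congr rfl fun j _ => by ring
    _ = ∑ j ∈ range N, 2 * e j * ∑ i ∈ Ico (j + 1) N, (M i - M (i + 1)) * √(U i) := by
        rw [sum_comm' (t' := range N) (s' := fun j => Ico (j + 1) N)]
        · simp only [mul_sum]
          exact sum_congr rfl fun j _ => sum_congr rfl fun i _ => by ring
        · intro i j
          simp only [mem_range, mem_Ico]
          omega
    _ ≤ ∑ j ∈ range N, 4 * B * (w j * (f (j + 1) - f j) ^ 2) :=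
        sum_le_sum fun j _ => by
          have hsq : √B * √B = B := Real.mul_self_sqrt hB0
          calc 2 * e j * ∑ i ∈ Ico (j + 1) N, (M i - M (i + 1)) * √(U i)
              ≤ 2 * e j * (2 * √B * √(M (j + 1))) :=
                mul_le_mul_of_nonneg_left (hinner j) (by linarith [he j])
            _ = 4 * (w j * (f (j + 1) - f j) ^ 2) * √B * (√(U (j + 1)) * √(M (j + 1))) := by
                ring
            _ ≤ 4 * (w j * (f (j + 1) - f j) ^ 2) * √B * √B := by
                gcongr
                · exact mul_nonneg (mul_nonneg (by norm_num) (mul_nonneg (hw j).le (sq_nonneg _)))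
                    (Real.sqrt_nonneg B)
                · exact hUM (j + 1)
            _ = _ := by rw [mul_assoc _ √B, hsq]; ring
    _ = _ := by rw [mul_sum]

end Hardy

/-- For `p = π` and `c i = π i * b i` this is the set whose infimum is `λ₁`. -/
def normalizedEnergies (p c : ℕ → ℝ) : Set ℝ :=
  { r | ∃ f : ℕ → ℝ,
      Summable (fun i => p i * f i) ∧ (∑' i, p i * f i) = 0 ∧
      Summable (fun i => p i * f i ^ 2) ∧ (∑' i, p i * f i ^ 2) = 1 ∧
      Summable (fun i => c i * (f (i + 1) - f i) ^ 2) ∧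
      r = ∑' i, c i * (f (i + 1) - f i) ^ 2 }

section Weights

variable {p c : ℕ → ℝ}

lemma tailSum_sub_tailSum_succ (hp : Summable p) (n : ℕ) :
    tailSum p n - tailSum p (n + 1) = p n := by
  rw [tailSum, ((summable_nat_add_iff n).2 hp).tsum_eq_zero_add, zero_add, tailSum]
  simp only [add_assoc, add_comm 1 n, add_sub_cancel_right]

lemma tailSum_pos (hp : ∀ i, 0 < p i) (hps : Summable p) (n : ℕ) : 0 < tailSum p n :=
  ((summable_nat_add_iff n).2 hps).tsum_pos (fun _ => (hp _).le) 0 (hp _)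

lemma tailSum_antitone (hp : ∀ i, 0 < p i) (hps : Summable p) : Antitone (tailSum p) :=
  antitone_nat_of_succ_le fun n => by linarith [tailSum_sub_tailSum_succ hps n, hp n]

lemma sum_range_add_tailSum (hp : Summable p) (n : ℕ) :
    ∑ i ∈ range n, p i + tailSum p n = ∑' i, p i :=
  hp.sum_add_tsum_nat_add n


lemma tsum_mul_sub_sq (hp : Summable p) {f : ℕ → ℝ} (hf : Summable fun i => p i * f i)
    (hf2 : Summable fun i => p i * f i ^ 2) (a : ℝ) :
    ∑' i, p i * (f i - a) ^ 2 =
      ∑' i, p i * f i ^ 2 - 2 * a * ∑' i, p i * f i + a ^ 2 * ∑' i, p i := by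
  have h : (fun i => p i * (f i - a) ^ 2) =
      fun i => (p i * f i ^ 2 - 2 * a * (p i * f i)) + a ^ 2 * p i := by
    funext i; ring
  rw [h, (hf2.sub (hf.mul_left _)).tsum_add (hp.mul_left _), hf2.tsum_sub (hf.mul_left _),
    tsum_mul_left, tsum_mul_left]

/-- The witness is the standardization `(f - m) / √v` of `f`. -/
lemma div_mem_normalizedEnergies (hp : Summable p) (hp1 : ∑' i, p i = 1) {f : ℕ → ℝ}
    (hf : Summable fun i => p i * f i)
    (hf2 : Summable fun i => p i * (f i - ∑' k, p k * f k) ^ 2)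
    (hv : 0 < ∑' i, p i * (f i - ∑' k, p k * f k) ^ 2)
    (hD : Summable fun i => c i * (f (i + 1) - f i) ^ 2) :
    (∑' i, c i * (f (i + 1) - f i) ^ 2) / ∑' i, p i * (f i - ∑' k, p k * f k) ^ 2 ∈
      normalizedEnergies p c := by
  set m := ∑' k, p k * f k
  set v := ∑' i, p i * (f i - m) ^ 2
  have hsq : √v ^ 2 = v := Real.sq_sqrt hv.le
  have hσ : √v ≠ 0 := (Real.sqrt_pos.2 hv).ne'
  have h1 : (fun i => p i * ((f i - m) / √v)) = fun i => (p i * f i - m * p i) / √v := by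
    funext i; ring
  have h2 : (fun i => p i * ((f i - m) / √v) ^ 2) = fun i => p i * (f i - m) ^ 2 / v := by
    funext i; rw [div_pow, hsq]; ring
  have h3 : (fun i => c i * ((f (i + 1) - m) / √v - (f i - m) / √v) ^ 2) =
      fun i => c i * (f (i + 1) - f i) ^ 2 / v := by
    funext i; rw [← sub_div, div_pow, hsq]; ring_nf
  refine ⟨fun i => (f i - m) / √v, ?_, ?_, ?_, ?_, ?_, ?_⟩
  · rw [h1]; exact (hf.sub (hp.mul_left m)).div_const _
  · rw [h1, tsum_div_const, hf.tsum_sub (hp.mul_left m), tsum_mul_left, hp1, mul_one, sub_self,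
      zero_div]
  · rw [h2]; exact hf2.div_const v
  · rw [h2, tsum_div_const, div_self hv.ne']
  · rw [h3]; exact hD.div_const v
  · rw [h3, tsum_div_const]

lemma nonneg_of_mem_normalizedEnergies (hc : ∀ i, 0 ≤ c i) {r : ℝ}
    (hr : r ∈ normalizedEnergies p c) : 0 ≤ r := by
  obtain ⟨f, -, -, -, -, -, rfl⟩ := hr
  exact tsum_nonneg fun i => mul_nonneg (hc i) (sq_nonneg _)

lemma one_le_four_mul_of_mem_normalizedEnergies (hp : ∀ i, 0 < p i) (hps : Summable p)
    (hp1 : ∑' i, p i = 1) (hc : ∀ i, 0 < c i) {B : ℝ}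
    (hB : ∀ n, tailSum p n * naturalScale c n ≤ B) {r : ℝ} (hr : r ∈ normalizedEnergies p c) :
    1 ≤ 4 * B * r := by
  obtain ⟨f, hf, hf0, hf2, hf21, hD, rfl⟩ := hr
  have hB0 : 0 ≤ B := by simpa [naturalScale] using hB 0
  have hpartial : ∀ N, ∑ i ∈ range N, p i * (f i - f 0) ^ 2 ≤
      4 * B * ∑' i, c i * (f (i + 1) - f i) ^ 2 := fun N =>
    calc _ = ∑ i ∈ range N, (tailSum p i - tailSum p (i + 1)) * (f i - f 0) ^ 2 := by
          simp only [tailSum_sub_tailSum_succ hps]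
      _ ≤ 4 * B * ∑ j ∈ range N, c j * (f (j + 1) - f j) ^ 2 :=
          hardy_inequality_range hc (tailSum_pos hp hps) (tailSum_antitone hp hps) hB f N
      _ ≤ _ := mul_le_mul_of_nonneg_left
          (hD.sum_le_tsum _ fun i _ => mul_nonneg (hc i).le (sq_nonneg _)) (by positivity)
  have hvar : ∑' i, p i * (f i - f 0) ^ 2 = 1 + f 0 ^ 2 := by
    rw [tsum_mul_sub_sq hps hf hf2, hf0, hf21, hp1]; ring
  calc (1 : ℝ) ≤ 1 + f 0 ^ 2 := by nlinarith [sq_nonneg (f 0)]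
    _ = _ := hvar.symm
    _ ≤ _ := Real.tsum_le_of_sum_range_le (fun i => mul_nonneg (hp i).le (sq_nonneg _)) hpartial


lemma summable_mul_of_eq_const_of_ge (hp : Summable p) {g : ℕ → ℝ} {n : ℕ} {β : ℝ}
    (hg : ∀ i, n ≤ i → g i = β) : Summable fun i => p i * g i := by
  refine (summable_nat_add_iff n).1 ?_
  simpa only [hg _ (Nat.le_add_left n _), mul_comm] using
    (summable_nat_add_iff n).2 (hp.mul_left β)

lemma mul_tailSum_mul_sq_le_tsum (hp : ∀ i, 0 ≤ p i) (hps : Summable p) (hp1 : ∑' i, p i = 1)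
    {g : ℕ → ℝ} {n : ℕ} {β : ℝ} (hg : ∀ i, n + 1 ≤ i → g i = β) (m : ℝ)
    (hs : Summable fun i => p i * (g i - m) ^ 2) :
    p 0 * tailSum p (n + 1) * (g 0 - β) ^ 2 ≤ ∑' i, p i * (g i - m) ^ 2 := by
  set q := tailSum p (n + 1)
  have hq : 0 ≤ q := tsum_nonneg fun _ => hp _
  have hhead : p 0 * (g 0 - m) ^ 2 ≤ ∑ i ∈ range (n + 1), p i * (g i - m) ^ 2 :=
    single_le_sum (f := fun i => p i * (g i - m) ^ 2)
      (fun i _ => mul_nonneg (hp i) (sq_nonneg _)) (mem_range.2 n.succ_pos)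
  have htail : ∑' i, p (i + (n + 1)) * (g (i + (n + 1)) - m) ^ 2 = q * (β - m) ^ 2 := by
    simp only [hg _ (Nat.le_add_left _ _)]
    exact tsum_mul_right
  have hmass : p 0 + q ≤ 1 := by
    have := single_le_sum (fun i _ => hp i) (mem_range.2 n.succ_pos)
    linarith [sum_range_add_tailSum hps (n + 1)]
  rw [← hs.sum_add_tsum_nat_add (n + 1), htail]
  -- `(p + q) (p X² + q Y²) - p q (X - Y)² = (p X + q Y)²`
  calc p 0 * q * (g 0 - β) ^ 2
      ≤ (p 0 + q) * (p 0 * (g 0 - m) ^ 2 + q * (β - m) ^ 2) := by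
        nlinarith [sq_nonneg (p 0 * (g 0 - m) + q * (β - m))]
    _ ≤ p 0 * (g 0 - m) ^ 2 + q * (β - m) ^ 2 := mul_le_of_le_one_left
        (add_nonneg (mul_nonneg (hp 0) (sq_nonneg _)) (mul_nonneg hq (sq_nonneg _))) hmass
    _ ≤ _ := by linarith

/-- The test function is the natural scale stopped at `n + 1`. -/
lemma exists_mem_normalizedEnergies_mul_le (hp : ∀ i, 0 < p i) (hps : Summable p)
    (hp1 : ∑' i, p i = 1) (hc : ∀ i, 0 < c i) (n : ℕ) :
    ∃ r ∈ normalizedEnergies p c,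
      r * (p 0 * tailSum p (n + 1) * naturalScale c (n + 1)) ≤ 1 := by
  set U := naturalScale c (n + 1)
  set f := fun i => naturalScale c (min i (n + 1))
  have hf0 : f 0 = 0 := by simp [f, naturalScale]
  have hf_tail : ∀ i, n + 1 ≤ i → f i = U := fun i hi => by simp [f, U, min_eq_right hi]
  have henergy : ∀ i, c i * (f (i + 1) - f i) ^ 2 = if i ∈ range (n + 1) then (c i)⁻¹ else 0 := by
    intro i
    by_cases hi : i < n + 1
    · have hci := (hc i).ne'
      simp only [f, min_eq_left hi.le, min_eq_left (Nat.succ_le_of_lt hi), naturalScale_succ_sub,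
        mem_range.2 hi, if_true]
      field_simp
    · simp [hf_tail i (by omega), hf_tail (i + 1) (by omega), hi]
  have hD : ∑' i, c i * (f (i + 1) - f i) ^ 2 = U := by
    simp only [henergy]
    rw [tsum_eq_sum (s := range (n + 1)) fun i hi => if_neg hi, sum_ite_mem, inter_self]
    rfl
  set m := ∑' k, p k * f k
  have hs : Summable fun i => p i * (f i - m) ^ 2 :=
    summable_mul_of_eq_const_of_ge hps (β := (U - m) ^ 2) fun i hi => by rw [hf_tail i hi]
  have hvar := mul_tailSum_mul_sq_le_tsum (fun i => (hp i).le) hps hp1 hf_tail m hs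
  rw [hf0, zero_sub, neg_sq] at hvar
  have hv : 0 < ∑' i, p i * (f i - m) ^ 2 :=
    (mul_pos (mul_pos (hp 0) (tailSum_pos hp hps (n + 1)))
      (pow_pos (naturalScale_succ_pos hc n) 2)).trans_le hvar
  refine ⟨_, div_mem_normalizedEnergies hps hp1 (summable_mul_of_eq_const_of_ge hps hf_tail) hs hv
    (summable_of_ne_finset_zero fun i hi => by rw [henergy, if_neg hi]), ?_⟩
  rw [hD, div_mul_eq_mul_div, div_le_one hv]
  linarith

end Weights

theorem sInf_normalizedEnergies_pos_iff {p c : ℕ → ℝ} (hp : ∀ i, 0 < p i) (hps : Summable p)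
    (hp1 : ∑' i, p i = 1) (hc : ∀ i, 0 < c i) :
    0 < sInf (normalizedEnergies p c) ↔
      BddAbove (Set.range fun n => tailSum p (n + 1) * naturalScale c (n + 1)) := by
  have hbdd : BddBelow (normalizedEnergies p c) :=
    ⟨0, fun _ => nonneg_of_mem_normalizedEnergies fun i => (hc i).le⟩
  constructor
  · intro hgap
    refine ⟨1 / (sInf (normalizedEnergies p c) * p 0), ?_⟩
    rintro _ ⟨n, rfl⟩
    obtain ⟨r, hr, hr_le⟩ := exists_mem_normalizedEnergies_mul_le hp hps hp1 hc n
    rw [le_div_iff₀ (mul_pos hgap (hp 0))]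
    have hK : 0 < p 0 * tailSum p (n + 1) * naturalScale c (n + 1) :=
      mul_pos (mul_pos (hp 0) (tailSum_pos hp hps (n + 1))) (naturalScale_succ_pos hc n)
    nlinarith [csInf_le hbdd hr]
  · rintro ⟨B, hB⟩
    have hBpos : 0 < B :=
      (mul_pos (tailSum_pos hp hps 1) (naturalScale_succ_pos hc 0)).trans_le (hB ⟨0, rfl⟩)
    have hB' : ∀ n, tailSum p n * naturalScale c n ≤ B
      | 0 => by simpa [naturalScale] using hBpos.le
      | n + 1 => hB ⟨n, rfl⟩
    obtain ⟨r₀, hr₀, -⟩ := exists_mem_normalizedEnergies_mul_le hp hps hp1 hc 0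
    refine (by positivity : 0 < 1 / (4 * B)).trans_le (le_csInf ⟨r₀, hr₀⟩ fun r hr => ?_)
    rw [div_le_iff₀ (by positivity)]
    linarith [one_le_four_mul_of_mem_normalizedEnergies hp hps hp1 hc hB' hr]

/-- The spectral gap `λ₁` of a birth-death process is strictly positive iff
`sup_{n ≥ 1} μ[n,∞) · Σ_{j=0}^{n-1} 1/(μⱼ bⱼ) < ∞`. -/
theorem spectral_gap_positive_iff_birth_death
    (b a : ℕ → ℝ) (hb : ∀ i, 0 < b i) (ha : ∀ i, 0 < a (i + 1))
    (mu : ℕ → ℝ) (hmu0 : mu 0 = 1)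
    (hmurec : ∀ n, mu (n + 1) = mu n * b n / a (n + 1))
    (hmusum : Summable mu)
    (Z : ℝ) (hZ : Z = ∑' n, mu n)
    (pi : ℕ → ℝ) (hpi : ∀ i, pi i = mu i / Z)
    (lam1 : ℝ)
    (hlam1 : lam1 = sInf { r : ℝ | ∃ f : ℕ → ℝ,
      Summable (fun i => pi i * f i) ∧ (∑' i, pi i * f i) = 0 ∧
      Summable (fun i => pi i * f i ^ 2) ∧ (∑' i, pi i * f i ^ 2) = 1 ∧
      Summable (fun i => pi i * b i * (f (i + 1) - f i) ^ 2) ∧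
      r = ∑' i, pi i * b i * (f (i + 1) - f i) ^ 2 }) :
    0 < lam1 ↔ BddAbove (Set.range fun n : ℕ =>
      (∑' j : ℕ, mu (n + 1 + j)) * ∑ j ∈ Finset.range (n + 1), (mu j * b j)⁻¹) := by
  have hmu : ∀ n, 0 < mu n := by
    intro n
    induction n with
    | zero => exact hmu0 ▸ one_pos
    | succ n ih => exact hmurec n ▸ div_pos (mul_pos ih (hb n)) (ha n)
  have hZpos : 0 < Z := hZ ▸ hmusum.tsum_pos (fun i => (hmu i).le) 0 (hmu 0)
  obtain rfl : pi = fun i => mu i / Z := funext hpi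
  have hrange : (fun n => tailSum (fun i => mu i / Z) (n + 1) *
      naturalScale (fun i => mu i / Z * b i) (n + 1)) =
      fun n : ℕ => (∑' j : ℕ, mu (n + 1 + j)) * ∑ j ∈ range (n + 1), (mu j * b j)⁻¹ := by
    funext n
    have htail : tailSum (fun i => mu i / Z) (n + 1) = (∑' j, mu (n + 1 + j)) / Z := by
      simp only [tailSum, tsum_div_const, add_comm _ (n + 1)]
    have hscale : naturalScale (fun i => mu i / Z * b i) (n + 1) =
        Z * ∑ j ∈ range (n + 1), (mu j * b j)⁻¹ := by
      rw [naturalScale, mul_sum]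
      exact sum_congr rfl fun j _ => by rw [div_mul_eq_mul_div, inv_div, div_eq_mul_inv]
    rw [htail, hscale]
    field_simp
  rw [hlam1, ← hrange]
  exact sInf_normalizedEnergies_pos_iff (fun i => div_pos (hmu i) hZpos)
    (hmusum.div_const Z) (by rw [tsum_div_const, ← hZ, div_self hZpos.ne']) fun i =>
    mul_pos (div_pos (hmu i) hZpos) (hb i)
end

section
/- Let δ = sup_{n≥1} μ[n,∞) · Σ_{j=0}^{n-1} 1/(μ_j b_j). Then: (i) for every f : ℤ₊ → ℝ with f_0 = 0, one has Σ_{n≥1} μ_n f_n² ≤ 4δ · Σ_{n≥0} μ_n b_n (f_{n+1} − f_n)²; and (ii) if A is any constant such that Σ_{n≥1} μ_n f_n² ≤ A · Σ_{n≥0} μ_n b_n (f_{n+1} − f_n)² for all f with f_0 = 0, then A ≥ δ. -/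
open MeasureTheory Set Real ENNReal

/-!
Write `w = μ b`, `g_j = f_{j+1} - f_j`, `S_n = ∑_{j<n} 1/w_j` and `T_n = μ[n,∞)`.
Cauchy–Schwarz with the weights `√S_{j+1}` gives
`f_{n+1}² ≤ 2 √S_{n+1} ∑_{j≤n} w_j √S_{j+1} g_j²`, because
`∑_j (S_{j+1} - S_j) / √S_{j+1} ≤ 2 √S_n` telescopes. After summing against `μ_{n+1}` and
exchanging the sums, `T_{n+1} S_{n+1} ≤ δ` bounds the inner tail `∑_{n≥j} μ_{n+1} √S_{n+1}` by
the telescoping `√δ ∑_{n≥j} (T_{n+1} - T_{n+2}) / √T_{n+1} ≤ 2 √δ √T_{j+1}`, and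
`√(S_{j+1} T_{j+1}) ≤ √δ` then yields the constant `4δ`.
Conversely, `f_k = S_{min k (N+1)}` has energy `S_{N+1}` and mass at least `T_{N+1} S_{N+1}²`.
-/

lemma sub_div_sqrt_le_two_mul_sub_sqrt {s t : ℝ} (hs : 0 ≤ s) (hst : s ≤ t) :
    (t - s) / √t ≤ 2 * (√t - √s) := by
  rcases (hs.trans hst).eq_or_lt with ht | ht
  · obtain rfl : s = 0 := le_antisymm (ht ▸ hst) hs
    simp [← ht]
  · rw [div_le_iff₀ (Real.sqrt_pos.2 ht)]
    nlinarith [Real.sq_sqrt hs, Real.sq_sqrt ht.le, Real.sqrt_nonneg s]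

lemma sum_range_sub_div_sqrt_le_s7 {u : ℕ → ℝ} (hu0 : 0 ≤ u 0) (hu : Monotone u) (n : ℕ) :
    ∑ i ∈ Finset.range n, (u (i + 1) - u i) / √(u (i + 1)) ≤ 2 * (√(u n) - √(u 0)) := by
  induction n with
  | zero => simp
  | succ n ih =>
    rw [Finset.sum_range_succ]
    linarith [sub_div_sqrt_le_two_mul_sub_sqrt (hu0.trans (hu (Nat.zero_le n)))
      (hu n.le_succ)]

lemma sum_Ico_sub_div_sqrt_le_s7 {u : ℕ → ℝ} (hu0 : ∀ n, 0 ≤ u n) (hu : Antitone u)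
    {m n : ℕ} (hmn : m ≤ n) :
    ∑ i ∈ Finset.Ico m n, (u i - u (i + 1)) / √(u i) ≤ 2 * (√(u m) - √(u n)) := by
  induction n, hmn using Nat.le_induction with
  | base => simp
  | succ n _ ih =>
    rw [Finset.sum_Ico_succ_top (by omega)]
    linarith [sub_div_sqrt_le_two_mul_sub_sqrt (hu0 (n + 1)) (hu n.le_succ)]

lemma sum_range_mul_sum_range_succ_eq (c v : ℕ → ℝ) (N : ℕ) :
    ∑ n ∈ Finset.range N, c n * ∑ j ∈ Finset.range (n + 1), v j =
      ∑ j ∈ Finset.range N, v j * ∑ n ∈ Finset.Ico j N, c n := by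
  simp only [Finset.mul_sum, Finset.range_eq_Ico]
  rw [← Finset.sum_Ico_Ico_comm]
  exact Finset.sum_congr rfl fun _ _ => Finset.sum_congr rfl fun _ _ => mul_comm _ _

lemma sq_sum_range_le_two_sqrt_mul (w g : ℕ → ℝ) (hw : ∀ n, 0 < w n) (n : ℕ) :
    (∑ j ∈ Finset.range n, g j) ^ 2 ≤
      2 * √(∑ i ∈ Finset.range n, (w i)⁻¹) * ∑ j ∈ Finset.range n,
        w j * √(∑ i ∈ Finset.range (j + 1), (w i)⁻¹) * g j ^ 2 := by
  set S : ℕ → ℝ := fun k => ∑ i ∈ Finset.range k, (w i)⁻¹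
  have hS : ∀ j, 0 < √(S (j + 1)) := fun j => Real.sqrt_pos.2 <|
    Finset.sum_pos (fun i _ => inv_pos.2 (hw i)) ⟨0, by simp⟩
  have hS0 : S 0 = 0 := Finset.sum_range_zero _
  have hSmono : Monotone S := monotone_nat_of_le_succ fun k => by
    simp only [S, Finset.sum_range_succ]; linarith [inv_pos.2 (hw k)]
  calc (∑ j ∈ Finset.range n, g j) ^ 2
      ≤ (∑ j ∈ Finset.range n, (S (j + 1) - S j) / √(S (j + 1))) *
          ∑ j ∈ Finset.range n, w j * √(S (j + 1)) * g j ^ 2 := by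
        refine Finset.sum_sq_le_sum_mul_sum_of_sq_le_mul _ (fun j _ => ?_) (fun j _ => ?_)
          (fun j _ => le_of_eq ?_)
        · exact div_nonneg (sub_nonneg.2 (hSmono j.le_succ)) (hS j).le
        · exact mul_nonneg (mul_nonneg (hw j).le (hS j).le) (sq_nonneg _)
        · have hr := (hS j).ne'
          generalize √(S (j + 1)) = r at hr ⊢
          simp only [S, Finset.sum_range_succ, add_sub_cancel_left]
          field_simp [(hw j).ne']
    _ ≤ 2 * √(S n) * ∑ j ∈ Finset.range n, w j * √(S (j + 1)) * g j ^ 2 := by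
        gcongr
        · exact Finset.sum_nonneg fun j _ =>
            mul_nonneg (mul_nonneg (hw j).le (hS j).le) (sq_nonneg _)
        · simpa [hS0] using sum_range_sub_div_sqrt_le_s7 hS0.ge hSmono n

lemma sum_Ico_mul_sqrt_le (mu S T : ℕ → ℝ) {c : ℝ} {j N : ℕ} (hmu : ∀ n, 0 ≤ mu n)
    (hT : ∀ n, T n = mu n + T (n + 1)) (hTpos : ∀ n, 0 < T n) (hc : 0 ≤ c) (hjN : j ≤ N)
    (hST : ∀ n < N, √(S (n + 1)) * √(T (n + 1)) ≤ c) :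
    ∑ n ∈ Finset.Ico j N, mu (n + 1) * √(S (n + 1)) ≤ 2 * c * √(T (j + 1)) := by
  have hterm : ∀ n ∈ Finset.Ico j N,
      mu (n + 1) * √(S (n + 1)) ≤ c * ((T (n + 1) - T (n + 1 + 1)) / √(T (n + 1))) := by
    intro n hn
    have hsT := Real.sqrt_pos.2 (hTpos (n + 1))
    calc mu (n + 1) * √(S (n + 1))
        = mu (n + 1) * (√(S (n + 1)) * √(T (n + 1))) / √(T (n + 1)) := by field_simp
      _ ≤ mu (n + 1) * c / √(T (n + 1)) := by
          gcongr
          · exact hmu _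
          · exact hST n (Finset.mem_Ico.1 hn).2
      _ = c * ((T (n + 1) - T (n + 1 + 1)) / √(T (n + 1))) := by rw [hT (n + 1)]; ring
  have hanti : Antitone fun k => T (k + 1) :=
    antitone_nat_of_succ_le fun k => by linarith [hT (k + 1), hmu (k + 1)]
  calc ∑ n ∈ Finset.Ico j N, mu (n + 1) * √(S (n + 1))
      ≤ c * ∑ n ∈ Finset.Ico j N, (T (n + 1) - T (n + 1 + 1)) / √(T (n + 1)) := by
        rw [Finset.mul_sum]; exact Finset.sum_le_sum hterm
    _ ≤ c * (2 * (√(T (j + 1)) - √(T (N + 1)))) := by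
        gcongr
        exact sum_Ico_sub_div_sqrt_le_s7 (u := fun k => T (k + 1)) (fun k => (hTpos _).le) hanti hjN
    _ ≤ 2 * c * √(T (j + 1)) := by nlinarith [Real.sqrt_nonneg (T (N + 1))]

lemma sum_mul_sq_sum_range_le (mu w T g : ℕ → ℝ) {d : ℝ} {N : ℕ} (hmu : ∀ n, 0 ≤ mu n)
    (hw : ∀ n, 0 < w n) (hT : ∀ n, T n = mu n + T (n + 1)) (hTpos : ∀ n, 0 < T n)
    (hd0 : 0 ≤ d) (hd : ∀ n < N, T (n + 1) * ∑ i ∈ Finset.range (n + 1), (w i)⁻¹ ≤ d) :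
    ∑ n ∈ Finset.range N, mu (n + 1) * (∑ j ∈ Finset.range (n + 1), g j) ^ 2 ≤
      4 * d * ∑ j ∈ Finset.range N, w j * g j ^ 2 := by
  set S : ℕ → ℝ := fun k => ∑ i ∈ Finset.range k, (w i)⁻¹
  set v : ℕ → ℝ := fun j => w j * √(S (j + 1)) * g j ^ 2
  have hv : ∀ j, 0 ≤ v j := fun j =>
    mul_nonneg (mul_nonneg (hw j).le (Real.sqrt_nonneg _)) (sq_nonneg _)
  have hST : ∀ n < N, √(S (n + 1)) * √(T (n + 1)) ≤ √d := fun n hn => by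
    rw [← Real.sqrt_mul' _ (hTpos _).le, mul_comm]
    exact Real.sqrt_le_sqrt (hd n hn)
  calc ∑ n ∈ Finset.range N, mu (n + 1) * (∑ j ∈ Finset.range (n + 1), g j) ^ 2
      ≤ ∑ n ∈ Finset.range N,
          2 * (mu (n + 1) * √(S (n + 1)) * ∑ j ∈ Finset.range (n + 1), v j) := by
        refine Finset.sum_le_sum fun n _ => ?_
        calc mu (n + 1) * (∑ j ∈ Finset.range (n + 1), g j) ^ 2
            ≤ mu (n + 1) * (2 * √(S (n + 1)) * ∑ j ∈ Finset.range (n + 1), v j) :=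
              mul_le_mul_of_nonneg_left (sq_sum_range_le_two_sqrt_mul w g hw (n + 1)) (hmu _)
          _ = _ := by ring
    _ = 2 * ∑ j ∈ Finset.range N, v j * ∑ n ∈ Finset.Ico j N, mu (n + 1) * √(S (n + 1)) := by
        rw [← Finset.mul_sum, sum_range_mul_sum_range_succ_eq]
    _ ≤ 2 * ∑ j ∈ Finset.range N, 2 * d * (w j * g j ^ 2) := by
        refine mul_le_mul_of_nonneg_left (Finset.sum_le_sum fun j hj => ?_) two_pos.le
        have hjN := Finset.mem_range.1 hj
        calc v j * ∑ n ∈ Finset.Ico j N, mu (n + 1) * √(S (n + 1))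
            ≤ v j * (2 * √d * √(T (j + 1))) :=
              mul_le_mul_of_nonneg_left (sum_Ico_mul_sqrt_le mu S T hmu hT hTpos
                (Real.sqrt_nonneg d) hjN.le hST) (hv j)
          _ = 2 * √d * (w j * g j ^ 2) * (√(S (j + 1)) * √(T (j + 1))) := by ring
          _ ≤ 2 * √d * (w j * g j ^ 2) * √d := by
              gcongr
              · have := hw j; positivity
              · exact hST j hjN
          _ = 2 * d * (w j * g j ^ 2) := by
              rw [mul_right_comm, mul_assoc 2, Real.mul_self_sqrt hd0]
    _ = 4 * d * ∑ j ∈ Finset.range N, w j * g j ^ 2 := by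
        rw [← Finset.mul_sum, ← mul_assoc, ← mul_assoc]; norm_num

def HardyInequality (mu w : ℕ → ℝ) (A : ℝ≥0∞) : Prop :=
  ∀ f : ℕ → ℝ, f 0 = 0 →
    ∑' n, ENNReal.ofReal (mu (n + 1) * f (n + 1) ^ 2) ≤
      A * ∑' n, ENNReal.ofReal (w n * (f (n + 1) - f n) ^ 2)

lemma exists_nnreal_bound_of_ofReal_le {x : ℕ → ℝ} {δ : ℝ≥0∞}
    (hx : ∀ n, ENNReal.ofReal (x n) ≤ δ) (N : ℕ) :
    ∃ d : NNReal, (∀ n < N, x n ≤ d) ∧ (d : ℝ≥0∞) ≤ δ := by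
  refine ⟨(Finset.range N).sup fun n => (x n).toNNReal, fun n hn => ?_, ?_⟩
  · exact (Real.le_coe_toNNReal _).trans <| NNReal.coe_le_coe.2 <|
      Finset.le_sup (f := fun n => (x n).toNNReal) (Finset.mem_range.2 hn)
  · rw [ENNReal.coe_finset_sup]
    exact Finset.sup_le fun n _ => hx n

lemma hardyInequality_four_mul (mu w : ℕ → ℝ) (hmu : ∀ n, 0 < mu n) (hw : ∀ n, 0 < w n)
    (hsum : Summable mu) {δ : ℝ≥0∞}
    (hδ : ∀ n, (∑' j, ENNReal.ofReal (mu (n + 1 + j))) *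
      ∑ j ∈ Finset.range (n + 1), ENNReal.ofReal (w j)⁻¹ ≤ δ) :
    HardyInequality mu w (4 * δ) := by
  intro f hf0
  set T : ℕ → ℝ := fun n => ∑' j, mu (n + j)
  have htail : ∀ n, Summable fun j => mu (n + j) := fun n =>
    ((summable_nat_add_iff n).2 hsum).congr fun j => by rw [add_comm]
  have hT : ∀ n, T n = mu n + T (n + 1) := fun n => by
    simp only [T, (htail n).tsum_eq_zero_add, add_zero]
    exact congrArg _ (tsum_congr fun j => by ring_nf)
  have hTpos : ∀ n, 0 < T n := fun n =>
    (hmu (n + 0)).trans_le ((htail n).le_tsum 0 fun j _ => (hmu _).le)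
  have hδ' : ∀ n, ENNReal.ofReal (T (n + 1) * ∑ i ∈ Finset.range (n + 1), (w i)⁻¹) ≤ δ := by
    intro n
    rw [ENNReal.ofReal_mul (hTpos _).le,
      ENNReal.ofReal_tsum_of_nonneg (fun j => (hmu _).le) (htail _),
      ENNReal.ofReal_sum_of_nonneg fun i _ => (inv_pos.2 (hw i)).le]
    exact hδ n
  refine ENNReal.tsum_le_of_sum_range_le fun N => ?_
  -- `δ` may be infinite, so the real constant is taken as a maximum of finitely many terms.
  obtain ⟨d, hdN, hdδ⟩ := exists_nnreal_bound_of_ofReal_le hδ' N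
  have hf : ∀ n, f (n + 1) = ∑ j ∈ Finset.range (n + 1), (f (j + 1) - f j) := fun n => by
    rw [Finset.sum_range_sub, hf0, sub_zero]
  calc ∑ n ∈ Finset.range N, ENNReal.ofReal (mu (n + 1) * f (n + 1) ^ 2)
      = ENNReal.ofReal (∑ n ∈ Finset.range N, mu (n + 1) * f (n + 1) ^ 2) :=
        (ENNReal.ofReal_sum_of_nonneg fun n _ => by have := hmu (n + 1); positivity).symm
    _ ≤ ENNReal.ofReal (4 * d * ∑ j ∈ Finset.range N, w j * (f (j + 1) - f j) ^ 2) := by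
        refine ENNReal.ofReal_le_ofReal ?_
        simpa only [← hf] using sum_mul_sq_sum_range_le mu w T (fun j => f (j + 1) - f j)
          (fun n => (hmu n).le) hw hT hTpos d.coe_nonneg hdN
    _ = 4 * d * ∑ j ∈ Finset.range N, ENNReal.ofReal (w j * (f (j + 1) - f j) ^ 2) := by
        rw [ENNReal.ofReal_mul (by positivity), ENNReal.ofReal_mul (by norm_num),
          ENNReal.ofReal_sum_of_nonneg fun j _ => by have := hw j; positivity]
        simp
    _ ≤ 4 * δ * ∑' n, ENNReal.ofReal (w n * (f (n + 1) - f n) ^ 2) := by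
        gcongr
        exact ENNReal.sum_le_tsum _

lemma tail_mul_sum_inv_le_of_hardyInequality (mu w : ℕ → ℝ) (hw : ∀ n, 0 < w n)
    {A : ℝ≥0∞} (hA : HardyInequality mu w A) (N : ℕ) :
    (∑' j, ENNReal.ofReal (mu (N + 1 + j))) *
      ∑ j ∈ Finset.range (N + 1), ENNReal.ofReal (w j)⁻¹ ≤ A := by
  set f : ℕ → ℝ := fun k => ∑ j ∈ Finset.range (min k (N + 1)), (w j)⁻¹
  set S : ℝ := ∑ j ∈ Finset.range (N + 1), (w j)⁻¹
  have hS : 0 < S := Finset.sum_pos (fun j _ => inv_pos.2 (hw j)) ⟨0, by simp⟩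
  have hfS : ∀ k, N + 1 ≤ k → f k = S := fun k hk => by simp only [f, min_eq_right hk, S]
  have henergy : ∑' n, ENNReal.ofReal (w n * (f (n + 1) - f n) ^ 2) = ENNReal.ofReal S := by
    rw [tsum_eq_sum (s := Finset.range (N + 1)) fun k hk => by
      rw [Finset.mem_range, not_lt] at hk
      simp [hfS k hk, hfS (k + 1) (by omega)],
      ENNReal.ofReal_sum_of_nonneg fun j _ => (inv_pos.2 (hw j)).le]
    refine Finset.sum_congr rfl fun k hk => ?_
    have hk := Finset.mem_range.1 hk
    simp only [f, min_eq_left (Nat.succ_le_of_lt hk), min_eq_left hk.le]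
    rw [Finset.sum_range_succ, add_sub_cancel_left, sq, ← mul_assoc, mul_inv_cancel₀ (hw k).ne',
      one_mul]
  have hmass : (∑' j, ENNReal.ofReal (mu (N + 1 + j))) * ENNReal.ofReal S ^ 2 ≤
      ∑' n, ENNReal.ofReal (mu (n + 1) * f (n + 1) ^ 2) := by
    rw [← ENNReal.tsum_mul_right]
    refine le_trans (le_of_eq (tsum_congr fun j => ?_))
      (ENNReal.tsum_comp_le_tsum_of_injective (add_left_injective N) _)
    rw [hfS _ (by omega), ENNReal.ofReal_mul' (sq_nonneg _), ENNReal.ofReal_pow hS.le,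
      show j + N + 1 = N + 1 + j by omega]
  rw [← ENNReal.ofReal_sum_of_nonneg fun j _ => (inv_pos.2 (hw j)).le]
  refine (ENNReal.mul_le_mul_iff_left (ENNReal.ofReal_pos.2 hS).ne' ENNReal.ofReal_ne_top).1 ?_
  calc _ = (∑' j, ENNReal.ofReal (mu (N + 1 + j))) * ENNReal.ofReal S ^ 2 := by ring
    _ ≤ _ := hmass
    _ ≤ A * ENNReal.ofReal S := henergy ▸ hA f (by simp [f])

/-- Discrete weighted Hardy inequality for birth-death processes (Miclo (1999b),
Chen (2000b)): with `δ = sup_{n≥1} μ[n,∞) Σ_{j<n} (μⱼbⱼ)⁻¹`, (i) every `f` with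
`f₀ = 0` satisfies `Σ_{n≥1} μₙ fₙ² ≤ 4δ Σ_{n≥0} μₙbₙ(f_{n+1}-fₙ)²`, and (ii) `δ`
is a lower bound for any constant `A` making this inequality valid. -/
theorem discrete_hardy_birth_death
    (b a : ℕ → ℝ) (hb : ∀ i, 0 < b i) (ha : ∀ i, 0 < a (i + 1))
    (mu : ℕ → ℝ) (hmu0 : mu 0 = 1)
    (hmurec : ∀ n, mu (n + 1) = mu n * b n / a (n + 1))
    (hmusum : Summable mu)
    (δ : ℝ≥0∞)
    (hδ : δ = ⨆ n : ℕ, (∑' j : ℕ, ENNReal.ofReal (mu (n + 1 + j))) *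
      ∑ j ∈ Finset.range (n + 1), ENNReal.ofReal ((mu j * b j)⁻¹)) :
    (∀ f : ℕ → ℝ, f 0 = 0 →
      (∑' n : ℕ, ENNReal.ofReal (mu (n + 1) * f (n + 1) ^ 2)) ≤
        4 * δ * ∑' n : ℕ, ENNReal.ofReal (mu n * b n * (f (n + 1) - f n) ^ 2)) ∧
    (∀ A : ℝ≥0∞,
      (∀ f : ℕ → ℝ, f 0 = 0 →
        (∑' n : ℕ, ENNReal.ofReal (mu (n + 1) * f (n + 1) ^ 2)) ≤
          A * ∑' n : ℕ, ENNReal.ofReal (mu n * b n * (f (n + 1) - f n) ^ 2)) →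
      δ ≤ A) := by
  have hmu : ∀ n, 0 < mu n := by
    intro n
    induction n with
    | zero => rw [hmu0]; exact one_pos
    | succ n ih => rw [hmurec n]; exact div_pos (mul_pos ih (hb n)) (ha n)
  have hw : ∀ n, 0 < mu n * b n := fun n => mul_pos (hmu n) (hb n)
  subst hδ
  exact ⟨hardyInequality_four_mul mu _ hmu hw hmusum (le_iSup _),
    fun A hA => iSup_le (tail_mul_sum_inv_le_of_hardyInequality mu _ hw hA)⟩
end

section
/- Let ν > 2 and suppose sup_{n≥1} μ[n,∞)^{(ν−2)/ν} · Σ_{j=0}^{n-1} 1/(μ_j b_j) < ∞. Then the Nash inequality holds: there exists η > 0 such that Var_π(f)^{1+2/ν} ≤ η^{-1} D(f) · (Σ_i π_i |f_i|)^{4/ν} for all f : ℤ₊ → ℝ with Σ_i π_i |f_i| < ∞. -/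
/-!
Put `p = ν / (ν - 2)`, so that `(ν - 2) / ν = 1 / p`. The hypothesis is Muckenhoupt's condition
`μ[n, ∞)^{1/p} Σ_{k<n} (μ_k b_k)⁻¹ ≤ B` for the weights `μ`, `μ b`; it survives the normalisation
to `π`, `π b` with constant `B' = Z^{1-1/p} B`, and yields the weighted Hardy inequality
`Σ_i π_i |f_i - f_0|^{2p} ≤ 2^{p+1} B'^p D(f)^p`. For the latter, apply Cauchy–Schwarz along the
path `0 → i` with weights `√(Σ_{j≤k} (π_j b_j)⁻¹)`, then Hölder, exchange the order of summation,
and use the telescoping bounds `Σ c_k / √s_k ≤ 2 √s` for partial sums and for tails.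
Hölder interpolation of `L²(π)` between `L¹(π)` and `L^{2p}(π)` gives
`Var_π(f)^{1+2/ν} ≤ ‖f - f_0‖_{2p}^2 ‖f - f_0‖_1^{4/ν}`, and `‖f - f_0‖_1 ≤ (1 + π_0⁻¹) ‖f‖_1`
because `π_0 |f_0| ≤ ‖f‖_1`.
-/

open Finset Real

theorem div_sqrt_add_le {c y : ℝ} (hc : 0 ≤ c) (hy : 0 ≤ y) :
    c / √(c + y) ≤ 2 * (√(c + y) - √y) := by
  rcases (add_nonneg hc hy).eq_or_lt with h | h
  · obtain rfl : c = 0 := by linarith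
    simp
  have hs := sq_sqrt (add_nonneg hc hy)
  have ht := sq_sqrt hy
  have hts : √y ≤ √(c + y) := sqrt_le_sqrt (by linarith)
  rw [div_le_iff₀ (sqrt_pos.2 h)]
  nlinarith [sq_nonneg (√(c + y) - √y)]

theorem sum_range_div_sqrt_sum_range_succ_le {a : ℕ → ℝ} (ha : ∀ k, 0 ≤ a k) (n : ℕ) :
    ∑ k ∈ range n, a k / √(∑ j ∈ range (k + 1), a j) ≤ 2 * √(∑ j ∈ range n, a j) := by
  let s n := 2 * √(∑ j ∈ range n, a j)
  calc ∑ k ∈ range n, a k / √(∑ j ∈ range (k + 1), a j)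
      ≤ ∑ k ∈ range n, (s (k + 1) - s k) := by
        gcongr with k
        simp only [s, sum_range_succ _ k, add_comm _ (a k), ← mul_sub]
        exact div_sqrt_add_le (ha k) (sum_nonneg fun j _ => ha j)
    _ = s n := by rw [sum_range_sub]; simp [s]

theorem sum_Ico_div_sqrt_tsum_le {u : ℕ → ℝ} (hu : ∀ i, 0 ≤ u i) (hsum : Summable u) (m n : ℕ) :
    ∑ i ∈ Ico m n, u i / √(∑' j, u (i + j)) ≤ 2 * √(∑' j, u (m + j)) := by
  let s i := 2 * √(∑' j, u (i + j))
  have htail (i : ℕ) : ∑' j, u (i + j) = u i + ∑' j, u (i + 1 + j) := by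
    have hs : Summable fun j => u (i + j) := hsum.comp_injective (add_right_injective i)
    rw [hs.tsum_eq_zero_add]
    simp only [add_zero, add_assoc, add_comm 1]
  rcases le_or_gt m n with hmn | hmn
  · calc ∑ i ∈ Ico m n, u i / √(∑' j, u (i + j))
        ≤ ∑ i ∈ Ico m n, (s i - s (i + 1)) := by
          gcongr with i
          simp only [s, htail i, ← mul_sub]
          exact div_sqrt_add_le (hu i) (tsum_nonneg fun j => hu _)
      _ = s m - s n := by
          rw [← neg_sub (s n), ← sum_Ico_sub s hmn, ← sum_neg_distrib]
          simp only [neg_sub]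
      _ ≤ s m := sub_le_self _ (by positivity)
  · rw [Ico_eq_empty_of_le hmn.le, sum_empty]
    positivity

def MuckenhouptBound (u v : ℕ → ℝ) (p B : ℝ) : Prop :=
  ∀ n, 1 ≤ n → (∑' j, u (n + j)) ^ p⁻¹ * ∑ k ∈ range n, (v k)⁻¹ ≤ B

namespace MuckenhouptBound

variable {u v : ℕ → ℝ} {p B : ℝ}

theorem nonneg (hu : ∀ i, 0 ≤ u i) (hv : ∀ k, 0 ≤ v k) (h : MuckenhouptBound u v p B) :
    0 ≤ B :=
  (h 1 le_rfl).trans' <| mul_nonneg (rpow_nonneg (tsum_nonneg fun _ => hu _) _)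
    (sum_nonneg fun k _ => inv_nonneg.2 (hv k))

theorem rpow_mul_sqrt_le (hu : ∀ i, 0 ≤ u i) (hv : ∀ k, 0 ≤ v k) (hp : 0 < p)
    (h : MuckenhouptBound u v p B) {n : ℕ} (hn : 1 ≤ n) :
    (∑ k ∈ range n, (v k)⁻¹) ^ (p / 2) * √(∑' j, u (n + j)) ≤ B ^ (p / 2) := by
  have ht : 0 ≤ ∑' j, u (n + j) := tsum_nonneg fun j => hu _
  have hA : 0 ≤ ∑ k ∈ range n, (v k)⁻¹ := sum_nonneg fun k _ => inv_nonneg.2 (hv k)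
  calc (∑ k ∈ range n, (v k)⁻¹) ^ (p / 2) * √(∑' j, u (n + j))
      = ((∑' j, u (n + j)) ^ p⁻¹ * ∑ k ∈ range n, (v k)⁻¹) ^ (p / 2) := by
        rw [mul_rpow (rpow_nonneg ht _) hA, ← rpow_mul ht, sqrt_eq_rpow, mul_comm]
        congr 2
        field_simp
    _ ≤ B ^ (p / 2) := rpow_le_rpow (mul_nonneg (rpow_nonneg ht _) hA) (h n hn) (by positivity)

theorem div_const {Z : ℝ} (hZ : 0 < Z) (hu : ∀ i, 0 ≤ u i) (h : MuckenhouptBound u v p B) :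
    MuckenhouptBound (fun i => u i / Z) (fun k => v k / Z) p (Z ^ (1 - p⁻¹) * B) := by
  intro n hn
  have ht : 0 ≤ ∑' j, u (n + j) := tsum_nonneg fun j => hu _
  calc (∑' j, u (n + j) / Z) ^ p⁻¹ * ∑ k ∈ range n, (v k / Z)⁻¹
      = Z ^ (1 - p⁻¹) * ((∑' j, u (n + j)) ^ p⁻¹ * ∑ k ∈ range n, (v k)⁻¹) := by
        simp only [tsum_div_const, inv_div, div_eq_mul_inv Z, ← mul_sum]
        rw [div_rpow ht hZ.le, rpow_sub hZ, rpow_one]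
        ring
    _ ≤ Z ^ (1 - p⁻¹) * B := by gcongr; exact h n hn

end MuckenhouptBound

theorem exists_pos_muckenhouptBound_of_bddAbove {u v : ℕ → ℝ} {p : ℝ}
    (h : BddAbove (Set.range fun n : ℕ =>
      (∑' j, u (n + 1 + j)) ^ p⁻¹ * ∑ j ∈ range (n + 1), (v j)⁻¹)) :
    ∃ B, 0 < B ∧ MuckenhouptBound u v p B := by
  obtain ⟨B, hB⟩ := h
  refine ⟨max B 1, by positivity, fun n hn => ?_⟩
  obtain ⟨m, rfl⟩ := Nat.exists_eq_add_of_le' hn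
  exact (hB ⟨m, rfl⟩).trans (le_max_left B 1)

section Hardy

variable {u v d : ℕ → ℝ} {p B : ℝ}

theorem sq_sum_range_le_mul_sum_sqrt (hv : ∀ k, 0 < v k) (i : ℕ) :
    (∑ k ∈ range i, d k) ^ 2 ≤
      2 * √(∑ k ∈ range i, (v k)⁻¹) *
        ∑ k ∈ range i, v k * d k ^ 2 * √(∑ j ∈ range (k + 1), (v j)⁻¹) := by
  have hA (k : ℕ) : 0 < √(∑ j ∈ range (k + 1), (v j)⁻¹) :=
    sqrt_pos.2 (sum_pos (fun j _ => inv_pos.2 (hv j)) nonempty_range_add_one)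
  calc (∑ k ∈ range i, d k) ^ 2
      ≤ (∑ k ∈ range i, v k * d k ^ 2 * √(∑ j ∈ range (k + 1), (v j)⁻¹)) *
          ∑ k ∈ range i, (v k)⁻¹ / √(∑ j ∈ range (k + 1), (v j)⁻¹) := by
        refine sum_sq_le_sum_mul_sum_of_sq_le_mul _ (fun k _ => ?_) (fun k _ => ?_)
          (fun k _ => le_of_eq ?_)
        · have := hv k; have := hA k; positivity
        · have := hv k; have := hA k; positivity
        · have hs := (hA k).ne'
          have hvk := (hv k).ne'
          generalize √(∑ j ∈ range (k + 1), (v j)⁻¹) = s at hs ⊢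
          field_simp
    _ ≤ (∑ k ∈ range i, v k * d k ^ 2 * √(∑ j ∈ range (k + 1), (v j)⁻¹)) *
          (2 * √(∑ k ∈ range i, (v k)⁻¹)) := by
        gcongr
        · exact sum_nonneg fun k _ => by have := hv k; have := hA k; positivity
        · exact sum_range_div_sqrt_sum_range_succ_le (fun k => (inv_pos.2 (hv k)).le) i
    _ = _ := mul_comm _ _

theorem sum_range_rpow_two_mul_le (hv : ∀ k, 0 < v k) (hd : ∀ k, 0 ≤ d k) (hp : 1 ≤ p)
    {i : ℕ} {W : ℝ} (hW : ∑ k ∈ range i, v k * d k ^ 2 ≤ W) :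
    (∑ k ∈ range i, d k) ^ (2 * p) ≤
      2 ^ p * W ^ (p - 1) * (∑ k ∈ range i, (v k)⁻¹) ^ (p / 2) *
        ∑ k ∈ range i, v k * d k ^ 2 * (∑ j ∈ range (k + 1), (v j)⁻¹) ^ (p / 2) := by
  set A : ℕ → ℝ := fun n => ∑ j ∈ range n, (v j)⁻¹
  set w : ℕ → ℝ := fun k => v k * d k ^ 2
  have hA (n : ℕ) : 0 ≤ A n := sum_nonneg fun j _ => (inv_pos.2 (hv j)).le
  have hw (k : ℕ) : 0 ≤ w k := mul_nonneg (hv k).le (sq_nonneg _)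
  have hsqrt (n : ℕ) : √(A n) ^ p = A n ^ (p / 2) := by
    rw [sqrt_eq_rpow, ← rpow_mul (hA n), one_div_mul_eq_div]
  have hsum_w : 0 ≤ ∑ k ∈ range i, w k := sum_nonneg fun k _ => hw k
  have hsum_ws : 0 ≤ ∑ k ∈ range i, w k * √(A (k + 1)) ^ p :=
    sum_nonneg fun k _ => mul_nonneg (hw k) (by positivity)
  have holder : (∑ k ∈ range i, w k * √(A (k + 1))) ^ p ≤
      W ^ (p - 1) * ∑ k ∈ range i, w k * A (k + 1) ^ (p / 2) := by
    calc (∑ k ∈ range i, w k * √(A (k + 1))) ^ p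
        ≤ ((∑ k ∈ range i, w k) ^ (1 - p⁻¹) *
            (∑ k ∈ range i, w k * √(A (k + 1)) ^ p) ^ p⁻¹) ^ p := by
          gcongr
          · exact sum_nonneg fun k _ => mul_nonneg (hw k) (sqrt_nonneg _)
          · exact inner_le_weight_mul_Lp_of_nonneg _ hp _ _ hw fun _ => sqrt_nonneg _
      _ = (∑ k ∈ range i, w k) ^ (p - 1) * ∑ k ∈ range i, w k * √(A (k + 1)) ^ p := by
          rw [mul_rpow (rpow_nonneg hsum_w _) (rpow_nonneg hsum_ws _), ← rpow_mul hsum_w,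
            rpow_inv_rpow hsum_ws (by linarith)]
          congr 2
          field_simp
      _ ≤ W ^ (p - 1) * ∑ k ∈ range i, w k * A (k + 1) ^ (p / 2) := by
          simp only [hsqrt]
          gcongr
          exact sum_nonneg fun k _ => mul_nonneg (hw k) (rpow_nonneg (hA _) _)
  calc (∑ k ∈ range i, d k) ^ (2 * p)
      = ((∑ k ∈ range i, d k) ^ 2) ^ p := by
        rw [← rpow_natCast, ← rpow_mul (sum_nonneg fun k _ => hd k)]
        norm_num
    _ ≤ (2 * √(A i) * ∑ k ∈ range i, w k * √(A (k + 1))) ^ p := by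
        gcongr
        exact sq_sum_range_le_mul_sum_sqrt hv i
    _ = 2 ^ p * A i ^ (p / 2) * (∑ k ∈ range i, w k * √(A (k + 1))) ^ p := by
        rw [mul_rpow (by positivity) (sum_nonneg fun k _ => mul_nonneg (hw k) (sqrt_nonneg _)),
          mul_rpow zero_le_two (sqrt_nonneg _), hsqrt]
    _ ≤ 2 ^ p * A i ^ (p / 2) * (W ^ (p - 1) * ∑ k ∈ range i, w k * A (k + 1) ^ (p / 2)) :=
        mul_le_mul_of_nonneg_left holder (mul_nonneg (by positivity) (rpow_nonneg (hA i) _))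
    _ = _ := by ring

theorem rpow_mul_sum_Ico_mul_rpow_le (hu : ∀ i, 0 < u i) (hsum : Summable u)
    (hv : ∀ k, 0 ≤ v k) (hp : 0 < p) (h : MuckenhouptBound u v p B) (m n : ℕ) :
    (∑ k ∈ range (m + 1), (v k)⁻¹) ^ (p / 2) *
        ∑ i ∈ Ico (m + 1) n, u i * (∑ k ∈ range i, (v k)⁻¹) ^ (p / 2) ≤ 2 * B ^ p := by
  have hu' (i : ℕ) : 0 ≤ u i := (hu i).le
  have hB := h.nonneg hu' hv
  have hpoint (i : ℕ) (hi : 1 ≤ i) :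
      u i * (∑ k ∈ range i, (v k)⁻¹) ^ (p / 2) ≤ B ^ (p / 2) * (u i / √(∑' j, u (i + j))) := by
    have ht : 0 < √(∑' j, u (i + j)) :=
      sqrt_pos.2 ((hsum.comp_injective (add_right_injective i)).tsum_pos (fun _ => hu' _) 0 (hu _))
    rw [mul_div_assoc', le_div_iff₀ ht, mul_assoc, mul_comm (B ^ (p / 2))]
    exact mul_le_mul_of_nonneg_left (h.rpow_mul_sqrt_le hu' hv hp hi) (hu i).le
  calc (∑ k ∈ range (m + 1), (v k)⁻¹) ^ (p / 2) *
        ∑ i ∈ Ico (m + 1) n, u i * (∑ k ∈ range i, (v k)⁻¹) ^ (p / 2)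
      ≤ (∑ k ∈ range (m + 1), (v k)⁻¹) ^ (p / 2) *
          (B ^ (p / 2) * (2 * √(∑' j, u (m + 1 + j)))) := by
        gcongr
        · exact rpow_nonneg (sum_nonneg fun k _ => inv_nonneg.2 (hv k)) _
        · refine (sum_le_sum fun i hi => hpoint i (by grind)).trans ?_
          rw [← mul_sum]
          exact mul_le_mul_of_nonneg_left (sum_Ico_div_sqrt_tsum_le hu' hsum _ _)
            (rpow_nonneg hB _)
    _ = 2 * B ^ (p / 2) *
          ((∑ k ∈ range (m + 1), (v k)⁻¹) ^ (p / 2) * √(∑' j, u (m + 1 + j))) := by ring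
    _ ≤ 2 * B ^ (p / 2) * B ^ (p / 2) := by
        gcongr
        exact h.rpow_mul_sqrt_le hu' hv hp (Nat.le_add_left 1 m)
    _ = 2 * B ^ p := by rw [mul_assoc, ← rpow_add' hB (by linarith), add_halves]

theorem hardy_sum_range_le (hu : ∀ i, 0 < u i) (hsum : Summable u) (hv : ∀ k, 0 < v k)
    (hd : ∀ k, 0 ≤ d k) (hp : 1 < p) (h : MuckenhouptBound u v p B)
    (hW : Summable fun k => v k * d k ^ 2) (n : ℕ) :
    ∑ i ∈ range n, u i * (∑ k ∈ range i, d k) ^ (2 * p) ≤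
      2 ^ (p + 1) * B ^ p * (∑' k, v k * d k ^ 2) ^ p := by
  set A : ℕ → ℝ := fun n => ∑ j ∈ range n, (v j)⁻¹
  set w : ℕ → ℝ := fun k => v k * d k ^ 2
  set W := ∑' k, w k
  have hw (k : ℕ) : 0 ≤ w k := mul_nonneg (hv k).le (sq_nonneg _)
  have hW0 : 0 ≤ W := tsum_nonneg hw
  have hB := h.nonneg (fun i => (hu i).le) fun k => (hv k).le
  set c := 2 ^ p * W ^ (p - 1)
  calc ∑ i ∈ range n, u i * (∑ k ∈ range i, d k) ^ (2 * p)
      ≤ ∑ i ∈ range n, ∑ k ∈ range i, c * w k * (A (k + 1) ^ (p / 2) * (u i * A i ^ (p / 2))) := by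
        refine sum_le_sum fun i _ => ?_
        calc u i * (∑ k ∈ range i, d k) ^ (2 * p)
            ≤ u i * (c * A i ^ (p / 2) * ∑ k ∈ range i, w k * A (k + 1) ^ (p / 2)) :=
              mul_le_mul_of_nonneg_left
                (sum_range_rpow_two_mul_le hv hd hp.le (hW.sum_le_tsum _ fun k _ => hw k)) (hu i).le
          _ = _ := by rw [mul_sum, mul_sum]; congr 1 with k; ring
    _ = ∑ k ∈ range n,
          c * w k * (A (k + 1) ^ (p / 2) * ∑ i ∈ Ico (k + 1) n, u i * A i ^ (p / 2)) := by
        simp only [range_eq_Ico]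
        rw [← sum_Ico_Ico_comm']
        simp only [mul_sum]
    _ ≤ ∑ k ∈ range n, c * w k * (2 * B ^ p) :=
        sum_le_sum fun k _ => mul_le_mul_of_nonneg_left
          (rpow_mul_sum_Ico_mul_rpow_le hu hsum (fun k => (hv k).le) (by linarith) h k n)
          (mul_nonneg (by positivity) (hw k))
    _ = 2 * c * B ^ p * ∑ k ∈ range n, w k := by rw [mul_sum]; congr 1 with k; ring
    _ ≤ 2 * c * B ^ p * W := by
        gcongr
        exact hW.sum_le_tsum _ fun k _ => hw k
    _ = 2 ^ (p + 1) * B ^ p * W ^ p := by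
        have hWp : W ^ (p - 1) * W = W ^ p := by
          rw [← rpow_add_one' hW0 (by linarith), sub_add_cancel]
        rw [rpow_add_one two_ne_zero, ← hWp]
        ring

theorem hardy_summable_and_tsum_le (hu : ∀ i, 0 < u i) (hsum : Summable u) (hv : ∀ k, 0 < v k)
    (hp : 1 < p) (h : MuckenhouptBound u v p B) {f : ℕ → ℝ}
    (hD : Summable fun k => v k * (f (k + 1) - f k) ^ 2) :
    Summable (fun i => u i * |f i - f 0| ^ (2 * p)) ∧
      ∑' i, u i * |f i - f 0| ^ (2 * p) ≤
        2 ^ (p + 1) * B ^ p * (∑' k, v k * (f (k + 1) - f k) ^ 2) ^ p := by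
  have hd2 (k : ℕ) : v k * |f (k + 1) - f k| ^ 2 = v k * (f (k + 1) - f k) ^ 2 := by
    rw [sq_abs]
  have hfin (n : ℕ) : ∑ i ∈ range n, u i * |f i - f 0| ^ (2 * p) ≤
      2 ^ (p + 1) * B ^ p * (∑' k, v k * (f (k + 1) - f k) ^ 2) ^ p := by
    calc ∑ i ∈ range n, u i * |f i - f 0| ^ (2 * p)
        ≤ ∑ i ∈ range n, u i * (∑ k ∈ range i, |f (k + 1) - f k|) ^ (2 * p) := by
          refine sum_le_sum fun i _ => mul_le_mul_of_nonneg_left ?_ (hu i).le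
          refine rpow_le_rpow (abs_nonneg _) ?_ (by linarith)
          rw [← sum_range_sub f i]
          exact abs_sum_le_sum_abs _ _
      _ ≤ _ := by
          simpa only [hd2] using hardy_sum_range_le hu hsum hv (fun k => abs_nonneg _) hp h
            (hD.congr fun k => (hd2 k).symm) n
  have hsum' := summable_of_sum_range_le (fun i => mul_nonneg (hu i).le (by positivity)) hfin
  exact ⟨hsum', hsum'.tsum_le_of_sum_range_le hfin⟩

end Hardy

theorem summable_and_tsum_mul_sq_le {w g : ℕ → ℝ} (hw : ∀ i, 0 ≤ w i) (hg : ∀ i, 0 ≤ g i)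
    {q : ℝ} (hq : 2 < q) (hgq : Summable fun i => w i * g i ^ q)
    (hg1 : Summable fun i => w i * g i) :
    Summable (fun i => w i * g i ^ 2) ∧
      ∑' i, w i * g i ^ 2 ≤
        (∑' i, w i * g i ^ q) ^ (q - 1)⁻¹ * (∑' i, w i * g i) ^ ((q - 2) / (q - 1)) := by
  set r := q - 1
  set s := (q - 1) / (q - 2)
  have hrs : r.HolderConjugate s := by
    rw [holderConjugate_iff_eq_conjExponent (by linarith)]
    ring
  have hpow {t : ℝ} (ht : t ≠ 0) (e : ℝ) (i : ℕ) :
      (w i ^ t⁻¹ * g i ^ e) ^ t = w i * g i ^ (e * t) := by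
    rw [mul_rpow (rpow_nonneg (hw i) _) (rpow_nonneg (hg i) _), ← rpow_mul (hw i),
      ← rpow_mul (hg i), inv_mul_cancel₀ ht, rpow_one]
  have hexp : q / r + s⁻¹ = 2 := by
    have : q - 1 ≠ 0 := by linarith
    have : q - 2 ≠ 0 := by linarith
    simp only [r, s]
    field_simp
    ring
  have hFG (i : ℕ) : (w i ^ r⁻¹ * g i ^ (q / r)) * (w i ^ s⁻¹ * g i ^ s⁻¹) = w i * g i ^ 2 := by
    rw [mul_mul_mul_comm, ← rpow_add' (hw i) (by rw [hrs.inv_add_inv_eq_one]; norm_num),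
      hrs.inv_add_inv_eq_one, rpow_one, ← rpow_add' (hg i) (by rw [hexp]; norm_num), hexp,
      rpow_two]
  obtain ⟨hsum, hle⟩ := summable_and_inner_le_Lp_mul_Lq_tsum_of_nonneg hrs
    (f := fun i => w i ^ r⁻¹ * g i ^ (q / r)) (g := fun i => w i ^ s⁻¹ * g i ^ s⁻¹)
    (fun i => mul_nonneg (rpow_nonneg (hw i) _) (rpow_nonneg (hg i) _))
    (fun i => mul_nonneg (rpow_nonneg (hw i) _) (rpow_nonneg (hg i) _))
    (by simpa only [hpow hrs.ne_zero, div_mul_cancel₀ _ hrs.ne_zero] using hgq)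
    (by simpa only [hpow hrs.symm.ne_zero, inv_mul_cancel₀ hrs.symm.ne_zero, rpow_one] using hg1)
  simp only [hFG, hpow hrs.ne_zero, hpow hrs.symm.ne_zero, div_mul_cancel₀ _ hrs.ne_zero,
    inv_mul_cancel₀ hrs.symm.ne_zero, rpow_one] at hsum hle
  refine ⟨hsum, hle.trans_eq ?_⟩
  rw [one_div, one_div, inv_div]

section Variance

variable {w f : ℕ → ℝ}

theorem tsum_mul_sub_sq_eq (hw1 : HasSum w 1) (hf2 : Summable fun i => w i * f i ^ 2)
    (hf : Summable fun i => w i * f i) (c : ℝ) :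
    ∑' i, w i * (f i - c) ^ 2 =
      (∑' i, w i * f i ^ 2) - (∑' i, w i * f i) ^ 2 + (∑' i, w i * f i - c) ^ 2 := by
  have e (i : ℕ) : w i * (f i - c) ^ 2 = w i * f i ^ 2 - 2 * c * (w i * f i) + c ^ 2 * w i := by
    ring
  rw [tsum_congr e, (hf2.sub (hf.mul_left _)).tsum_add (hw1.summable.mul_left _),
    hf2.tsum_sub (hf.mul_left _), tsum_mul_left, tsum_mul_left, hw1.tsum_eq]
  ring

theorem variance_nonneg_and_le_tsum_mul_sub_sq (hw : ∀ i, 0 ≤ w i) (hw1 : HasSum w 1) {c : ℝ}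
    (h2 : Summable fun i => w i * (f i - c) ^ 2) (h1 : Summable fun i => w i * |f i - c|) :
    0 ≤ (∑' i, w i * f i ^ 2) - (∑' i, w i * f i) ^ 2 ∧
      (∑' i, w i * f i ^ 2) - (∑' i, w i * f i) ^ 2 ≤ ∑' i, w i * (f i - c) ^ 2 := by
  have hfc : Summable fun i => w i * (f i - c) :=
    .of_norm (by simpa only [norm_mul, norm_eq_abs, abs_of_nonneg (hw _)] using h1)
  have hf : Summable fun i => w i * f i :=
    (hfc.add (hw1.summable.mul_left c)).congr fun i => by ring
  have hf2 : Summable fun i => w i * f i ^ 2 :=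
    ((h2.add (hfc.mul_left (2 * c))).add (hw1.summable.mul_left (c ^ 2))).congr fun i => by ring
  constructor
  · have := tsum_mul_sub_sq_eq hw1 hf2 hf (∑' i, w i * f i)
    rw [sub_self, zero_pow two_ne_zero, add_zero] at this
    exact this ▸ tsum_nonneg fun i => mul_nonneg (hw i) (sq_nonneg _)
  · rw [tsum_mul_sub_sq_eq hw1 hf2 hf c]
    exact le_add_of_nonneg_right (sq_nonneg _)

theorem variance_rpow_le (hw : ∀ i, 0 ≤ w i) (hw1 : HasSum w 1) {ν : ℝ} (hν : 2 < ν) (c : ℝ)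
    (hq : Summable fun i => w i * |f i - c| ^ (2 * ν / (ν - 2)))
    (h1 : Summable fun i => w i * |f i - c|) :
    ((∑' i, w i * f i ^ 2) - (∑' i, w i * f i) ^ 2) ^ (1 + 2 / ν) ≤
      (∑' i, w i * |f i - c| ^ (2 * ν / (ν - 2))) ^ ((ν - 2) / ν) *
        (∑' i, w i * |f i - c|) ^ (4 / ν) := by
  have hν2 : ν - 2 ≠ 0 := by linarith
  have : ν + 2 ≠ 0 := by linarith
  have : ν ≠ 0 := by linarith
  obtain ⟨h2, hle⟩ := summable_and_tsum_mul_sq_le hw (fun i => abs_nonneg (f i - c))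
    (by rw [lt_div_iff₀ (by linarith)]; linarith) hq h1
  have hq1 : 2 * ν / (ν - 2) - 1 = (ν + 2) / (ν - 2) := by field_simp; ring
  have hq2 : 2 * ν / (ν - 2) - 2 = 4 / (ν - 2) := by field_simp; ring
  rw [hq1, hq2, inv_div, div_div_div_cancel_right₀ hν2] at hle
  simp only [sq_abs] at h2 hle
  obtain ⟨hvar0, hvar⟩ := variance_nonneg_and_le_tsum_mul_sub_sq hw hw1 h2 h1
  have hLq : 0 ≤ ∑' i, w i * |f i - c| ^ (2 * ν / (ν - 2)) :=
    tsum_nonneg fun i => mul_nonneg (hw i) (by positivity)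
  have hL1 : 0 ≤ ∑' i, w i * |f i - c| := tsum_nonneg fun i => mul_nonneg (hw i) (abs_nonneg _)
  calc ((∑' i, w i * f i ^ 2) - (∑' i, w i * f i) ^ 2) ^ (1 + 2 / ν)
      ≤ ((∑' i, w i * |f i - c| ^ (2 * ν / (ν - 2))) ^ ((ν - 2) / (ν + 2)) *
          (∑' i, w i * |f i - c|) ^ (4 / (ν + 2))) ^ (1 + 2 / ν) := by
        gcongr
        exact hvar.trans hle
    _ = _ := by
        rw [mul_rpow (rpow_nonneg hLq _) (rpow_nonneg hL1 _), ← rpow_mul hLq, ← rpow_mul hL1]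
        congr 2 <;> field_simp

theorem summable_and_tsum_mul_abs_sub_le (hw : ∀ i, 0 ≤ w i) (hw1 : HasSum w 1)
    (hf : Summable fun i => w i * |f i|) {j : ℕ} (hj : 0 < w j) :
    Summable (fun i => w i * |f i - f j|) ∧
      ∑' i, w i * |f i - f j| ≤ (1 + (w j)⁻¹) * ∑' i, w i * |f i| := by
  have hle (i : ℕ) : w i * |f i - f j| ≤ w i * |f i| + |f j| * w i := by
    nlinarith [abs_sub (f i) (f j), hw i]
  have hsum := hf.add (hw1.summable.mul_left |f j|)
  have hsum' : Summable fun i => w i * |f i - f j| :=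
    .of_nonneg_of_le (fun i => mul_nonneg (hw i) (abs_nonneg _)) hle hsum
  have hfj : w j * |f j| ≤ ∑' i, w i * |f i| :=
    hf.le_tsum j fun i _ => mul_nonneg (hw i) (abs_nonneg _)
  refine ⟨hsum', ?_⟩
  calc ∑' i, w i * |f i - f j|
      ≤ ∑' i, (w i * |f i| + |f j| * w i) := hsum'.tsum_le_tsum hle hsum
    _ = ∑' i, w i * |f i| + |f j| := by
        rw [hf.tsum_add (hw1.summable.mul_left _), tsum_mul_left, hw1.tsum_eq, mul_one]
    _ ≤ (1 + (w j)⁻¹) * ∑' i, w i * |f i| := by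
        rw [add_mul, one_mul, inv_mul_eq_div]
        gcongr
        exact (le_div_iff₀' hj).2 hfj

theorem variance_rpow_le_of_tsum_rpow_le (hw : ∀ i, 0 ≤ w i) (hw0 : 0 < w 0) (hw1 : HasSum w 1)
    {ν K D : ℝ} (hν : 2 < ν) (hK : 0 ≤ K) (hD : 0 ≤ D) (hf : Summable fun i => w i * |f i|)
    (hq : Summable fun i => w i * |f i - f 0| ^ (2 * ν / (ν - 2)))
    (hqle : ∑' i, w i * |f i - f 0| ^ (2 * ν / (ν - 2)) ≤ K * D ^ (ν / (ν - 2))) :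
    ((∑' i, w i * f i ^ 2) - (∑' i, w i * f i) ^ 2) ^ (1 + 2 / ν) ≤
      K ^ ((ν - 2) / ν) * (1 + (w 0)⁻¹) ^ (4 / ν) * D * (∑' i, w i * |f i|) ^ (4 / ν) := by
  obtain ⟨h1, h1le⟩ := summable_and_tsum_mul_abs_sub_le hw hw1 hf hw0
  have hq0 : 0 ≤ ∑' i, w i * |f i - f 0| ^ (2 * ν / (ν - 2)) :=
    tsum_nonneg fun i => mul_nonneg (hw i) (by positivity)
  have h10 : 0 ≤ ∑' i, w i * |f i - f 0| := tsum_nonneg fun i => mul_nonneg (hw i) (abs_nonneg _)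
  have hp : ν / (ν - 2) ≠ 0 := (div_pos (by linarith) (by linarith)).ne'
  calc ((∑' i, w i * f i ^ 2) - (∑' i, w i * f i) ^ 2) ^ (1 + 2 / ν)
      ≤ (∑' i, w i * |f i - f 0| ^ (2 * ν / (ν - 2))) ^ ((ν - 2) / ν) *
          (∑' i, w i * |f i - f 0|) ^ (4 / ν) := variance_rpow_le hw hw1 hν (f 0) hq h1
    _ ≤ (K * D ^ (ν / (ν - 2))) ^ ((ν - 2) / ν) *
          ((1 + (w 0)⁻¹) * ∑' i, w i * |f i|) ^ (4 / ν) := by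
        gcongr
    _ = _ := by
        rw [mul_rpow hK (rpow_nonneg hD _), ← inv_div, rpow_rpow_inv hD hp,
          mul_rpow (by positivity) (tsum_nonneg fun i => mul_nonneg (hw i) (abs_nonneg _))]
        ring

end Variance

theorem pos_of_succ_eq_mul_div {μ b a : ℕ → ℝ} (h0 : 0 < μ 0)
    (hrec : ∀ n, μ (n + 1) = μ n * b n / a (n + 1)) (hb : ∀ n, 0 < b n)
    (ha : ∀ n, 0 < a (n + 1)) (n : ℕ) : 0 < μ n := by
  induction n with
  | zero => exact h0
  | succ n ih => exact hrec n ▸ div_pos (mul_pos ih (hb n)) (ha n)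

/-- Mao (2000c): sufficient condition for the Nash inequality for a birth-death
process. If `ν > 2` and `sup_{n≥1} μ[n,∞)^{(ν-2)/ν} Σ_{j<n} (μⱼbⱼ)⁻¹ < ∞`, then
there is `η > 0` with `Var_π(f)^{1+2/ν} ≤ η⁻¹ D(f) (Σᵢ πᵢ|fᵢ|)^{4/ν}`. -/
theorem nash_inequality_birth_death
    (b a : ℕ → ℝ) (hb : ∀ i, 0 < b i) (ha : ∀ i, 0 < a (i + 1))
    (mu : ℕ → ℝ) (hmu0 : mu 0 = 1)
    (hmurec : ∀ n, mu (n + 1) = mu n * b n / a (n + 1))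
    (hmusum : Summable mu)
    (Z : ℝ) (hZ : Z = ∑' n, mu n)
    (pi : ℕ → ℝ) (hpi : ∀ i, pi i = mu i / Z)
    (ν : ℝ) (hν : 2 < ν)
    (hcrit : BddAbove (Set.range fun n : ℕ =>
      (∑' j : ℕ, mu (n + 1 + j)) ^ ((ν - 2) / ν) *
        ∑ j ∈ Finset.range (n + 1), (mu j * b j)⁻¹)) :
    ∃ η : ℝ, 0 < η ∧ ∀ f : ℕ → ℝ,
      Summable (fun i => pi i * |f i|) →
      Summable (fun i => pi i * b i * (f (i + 1) - f i) ^ 2) →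
      ((∑' i, pi i * f i ^ 2) - (∑' i, pi i * f i) ^ 2) ^ (1 + 2 / ν) ≤
        η⁻¹ * (∑' i, pi i * b i * (f (i + 1) - f i) ^ 2) *
          (∑' i, pi i * |f i|) ^ (4 / ν) := by
  have hmu := pos_of_succ_eq_mul_div (hmu0 ▸ one_pos) hmurec hb ha
  have hZ0 : 0 < Z := hZ ▸ hmusum.tsum_pos (fun i => (hmu i).le) 0 (hmu 0)
  have hpi0 (i : ℕ) : 0 < pi i := hpi i ▸ div_pos (hmu i) hZ0
  have hpi1 : HasSum pi 1 := by
    simpa only [← hpi, ← hZ, div_self hZ0.ne'] using hmusum.hasSum.div_const Z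
  set p := ν / (ν - 2)
  have hp : 1 < p := by rw [lt_div_iff₀ (by linarith)]; linarith
  obtain ⟨B, hB, hmu_bound⟩ := exists_pos_muckenhouptBound_of_bddAbove (p := p) (by rwa [inv_div])
  have hpi_bound : MuckenhouptBound pi (fun k => pi k * b k) p (Z ^ (1 - p⁻¹) * B) := by
    rw [show pi = fun i => mu i / Z from funext hpi]
    simpa only [div_mul_eq_mul_div] using hmu_bound.div_const hZ0 fun i => (hmu i).le
  refine ⟨((2 ^ (p + 1) * (Z ^ (1 - p⁻¹) * B) ^ p) ^ ((ν - 2) / ν) * (1 + (pi 0)⁻¹) ^ (4 / ν))⁻¹,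
    by have := hpi0 0; positivity, fun f hS hD => ?_⟩
  obtain ⟨hq, hqle⟩ := hardy_summable_and_tsum_le hpi0 hpi1.summable
    (fun k => mul_pos (hpi0 k) (hb k)) hp hpi_bound hD
  have h2p : 2 * ν / (ν - 2) = 2 * p := mul_div_assoc _ _ _
  rw [inv_inv]
  exact variance_rpow_le_of_tsum_rpow_le (fun i => (hpi0 i).le) (hpi0 0) hpi1 hν (by positivity)
    (tsum_nonneg fun i => mul_nonneg (mul_nonneg (hpi0 i).le (hb i).le) (sq_nonneg _)) hS
    (by rwa [h2p]) (by rwa [h2p])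
end
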